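/- arXiv:1908.04358 — 11 statements merged into one kernel-verified Lean document; each statement's English description precedes it below -/
import Mathlib

section
/- Let A be a weighted directed graph on n vertices that is simply forward influenced, and let B = {i : d i = 0} be its set of source vertices. Then for every function c : B → ℝ there exists a vector x : Fin n → ℝ such that Lᵀ.mulVec x = d and x i = c i for every i ∈ B. -/
open Matrix BigOperators

noncomputable section

variable {n : ℕ}

/-- Weighted in-degree vector. -/
def indeg (A : Matrix (Fin n) (Fin n) ℝ) (j : Fin n) : ℝ := ∑ i, A i j

/-- Weighted out-degree vector. -/
def outdeg (A : Matrix (Fin n) (Fin n) ℝ) (i : Fin n) : ℝ := ∑ j, A i j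

/-- Weighted in-degree Laplacian `L = diag d - A`. -/
def inLap (A : Matrix (Fin n) (Fin n) ℝ) : Matrix (Fin n) (Fin n) ℝ :=
  Matrix.diagonal (indeg A) - A

/-- Reachability: reflexive-transitive closure of the edge relation. -/
def Reaches (A : Matrix (Fin n) (Fin n) ℝ) : Fin n → Fin n → Prop :=
  Relation.ReflTransGen fun i j => 0 < A i j

/-- Weak connectivity. -/
def WeaklyConnected (A : Matrix (Fin n) (Fin n) ℝ) : Prop :=
  ∀ i j : Fin n, Relation.ReflTransGen (fun i j => 0 < A i j ∨ 0 < A j i) i j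

/-- Strong connectivity. -/
def StronglyConnected (A : Matrix (Fin n) (Fin n) ℝ) : Prop :=
  ∀ i j : Fin n, Reaches A i j

/-- Simply forward influenced graph. -/
def SimplyForwardInfluenced (A : Matrix (Fin n) (Fin n) ℝ) : Prop :=
  (∃ i, indeg A i = 0) ∧ (∃ i, indeg A i ≠ 0) ∧
    ∀ j, indeg A j ≠ 0 → ∃ i, indeg A i = 0 ∧ Reaches A i j

/-- A set of vertices with no incoming edges from outside. -/
def InClosed (A : Matrix (Fin n) (Fin n) ℝ) (S : Finset (Fin n)) : Prop :=
  ∀ i j : Fin n, i ∉ S → j ∈ S → A i j = 0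

/-- Minimal source subgraph. -/
def MinSourceSubgraph (A : Matrix (Fin n) (Fin n) ℝ) (S : Finset (Fin n)) : Prop :=
  S.Nonempty ∧ InClosed A S ∧ ∀ T ⊆ S, T.Nonempty → T ≠ S → ¬ InClosed A T

/-- Total edge weight. -/
def totalWeight (A : Matrix (Fin n) (Fin n) ℝ) : ℝ := ∑ i, ∑ j, A i j

/-- `g` is a forward hierarchical level vector: a minimizer of `‖Lᵀ x - d‖₂`. -/
def IsFHL (A : Matrix (Fin n) (Fin n) ℝ) (g : Fin n → ℝ) : Prop :=
  ∀ x : Fin n → ℝ,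
    ∑ i, ((inLap A)ᵀ.mulVec g i - indeg A i) ^ 2 ≤
      ∑ i, ((inLap A)ᵀ.mulVec x i - indeg A i) ^ 2

/-- Forward democracy coefficient, computed from a forward hierarchical level vector `g`. -/
def etaF (A : Matrix (Fin n) (Fin n) ℝ) (g : Fin n → ℝ) : ℝ :=
  1 - (∑ i, ∑ j, A i j * (g j - g i)) / totalWeight A

/-- Forward influence centrality of a vertex, from a forward hierarchical level vector `g`. -/
def vF (A : Matrix (Fin n) (Fin n) ℝ) (g : Fin n → ℝ) (i : Fin n) : ℝ :=
  if indeg A i = 0 then 1 else 1 - (∑ k, A k i * (g i - g k)) / indeg A i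

/-- `b` is the orthogonal projection of `d` onto `ker L` (standard Euclidean inner product). -/
def IsProjKerL (A : Matrix (Fin n) (Fin n) ℝ) (b : Fin n → ℝ) : Prop :=
  (inLap A).mulVec b = 0 ∧
    ∀ x : Fin n → ℝ, (inLap A).mulVec x = 0 → ∑ i, (indeg A i - b i) * x i = 0

/-- `Lᵀ x` computed entrywise. -/
lemma inLapT_mulVec (A : Matrix (Fin n) (Fin n) ℝ) (x : Fin n → ℝ) (j : Fin n) :
    (inLap A)ᵀ.mulVec x j = indeg A j * x j - ∑ i, A i j * x i := by
  simp only [Matrix.mulVec, dotProduct, Matrix.transpose_apply, inLap,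
    Matrix.sub_apply, Matrix.diagonal_apply, sub_mul, Finset.sum_sub_distrib,
    ite_mul, zero_mul]
  rw [Finset.sum_ite_eq' Finset.univ j (fun i => indeg A i * x i)]
  simp

/-- Maximum principle: a vector vanishing on sources and harmonic on non-sources is ≤ 0. -/
lemma maxle (A : Matrix (Fin n) (Fin n) ℝ) (hA : ∀ i j, 0 ≤ A i j)
    (hsfi : SimplyForwardInfluenced A) (x : Fin n → ℝ)
    (h0 : ∀ i, indeg A i = 0 → x i = 0)
    (heq : ∀ j, indeg A j ≠ 0 → indeg A j * x j = ∑ i, A i j * x i) :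
    ∀ j, x j ≤ 0 := by
  by_contra h
  push_neg at h
  obtain ⟨j, hj⟩ := h
  obtain ⟨j0, -, hj0⟩ := Finset.exists_max_image Finset.univ x ⟨j, Finset.mem_univ j⟩
  have hj0' : ∀ i, x i ≤ x j0 := fun i => hj0 i (Finset.mem_univ i)
  set M := x j0 with hMdef
  have hM : 0 < M := lt_of_lt_of_le hj (hj0' j)
  have step : ∀ b, indeg A b ≠ 0 → x b = M → ∀ a, 0 < A a b →
      (indeg A a ≠ 0 ∧ x a = M) := by
    intro b hb hbM a hab
    have heqb := heq b hb
    have hsum : ∑ i, A i b * x i = ∑ i, A i b * M := by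
      rw [← heqb, ← Finset.sum_mul, hbM]
      rfl
    have hle : ∀ i ∈ Finset.univ, A i b * x i ≤ A i b * M :=
      fun i _ => mul_le_mul_of_nonneg_left (hj0' i) (hA i b)
    have hxa : x a = M := by
      by_contra hne
      have hlt : ∑ i, A i b * x i < ∑ i, A i b * M :=
        Finset.sum_lt_sum hle ⟨a, Finset.mem_univ a,
          mul_lt_mul_of_pos_left (lt_of_le_of_ne (hj0' a) hne) hab⟩
      exact absurd hsum (ne_of_lt hlt)
    refine ⟨?_, hxa⟩
    intro hsrc
    rw [h0 a hsrc] at hxa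
    exact hM.ne hxa
  have hj0ns : indeg A j0 ≠ 0 := by
    intro hsrc
    exact hM.ne' (by rw [hMdef, h0 j0 hsrc])
  obtain ⟨s, hs, hreach⟩ := hsfi.2.2 j0 hj0ns
  have key : indeg A s ≠ 0 ∧ x s = M := by
    refine Relation.ReflTransGen.head_induction_on hreach ⟨hj0ns, rfl⟩ ?_
    intro a c hac _ hc
    exact step c hc.1 hc.2 a hac
  exact key.1 hs

theorem stmt_1 (hn : 0 < n) (A : Matrix (Fin n) (Fin n) ℝ)
    (hA : ∀ i j, 0 ≤ A i j) (hdiag : ∀ i, A i i = 0)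
    (hsfi : SimplyForwardInfluenced A) :
    ∀ c : {i : Fin n // indeg A i = 0} → ℝ,
      ∃ x : Fin n → ℝ, (inLap A)ᵀ.mulVec x = indeg A ∧
        ∀ (i : Fin n) (h : indeg A i = 0), x i = c ⟨i, h⟩ := by
  intro c
  -- the linear endomorphism
  set T : (Fin n → ℝ) →ₗ[ℝ] (Fin n → ℝ) :=
    { toFun := fun x j => if indeg A j = 0 then x j else
        indeg A j * x j - ∑ i, A i j * (if indeg A i = 0 then 0 else x i)
      map_add' := by
        intro x y
        funext j
        by_cases hj : indeg A j = 0 <;> simp only [Pi.add_apply, hj, if_pos, if_neg,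
          if_true, if_false]
        have : ∀ i, (if indeg A i = 0 then (0:ℝ) else x i + y i)
            = (if indeg A i = 0 then 0 else x i) + (if indeg A i = 0 then 0 else y i) := by
          intro i; split <;> simp
        simp only [this, mul_add, Finset.mul_sum, Finset.sum_add_distrib]
        ring
      map_smul' := by
        intro r x
        funext j
        by_cases hj : indeg A j = 0 <;> simp only [Pi.smul_apply, smul_eq_mul,
          RingHom.id_apply, hj, if_true, if_false]
        have : ∀ i, (if indeg A i = 0 then (0:ℝ) else r * x i)
            = r * (if indeg A i = 0 then 0 else x i) := by
          intro i; split <;> simp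
        simp only [this, Finset.mul_sum]
        ring_nf
        rw [Finset.mul_sum]
        ring_nf } with hT
  have hTapp : ∀ (x : Fin n → ℝ) (j : Fin n), T x j = if indeg A j = 0 then x j else
      indeg A j * x j - ∑ i, A i j * (if indeg A i = 0 then 0 else x i) := fun _ _ => rfl
  have hTinj : Function.Injective T := by
    rw [← LinearMap.ker_eq_bot, LinearMap.ker_eq_bot']
    intro x hx
    have hx' : ∀ j, T x j = 0 := fun j => congrFun hx j
    have h0 : ∀ i, indeg A i = 0 → x i = 0 := by
      intro i hi
      have := hx' i
      rwa [hTapp, if_pos hi] at this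
    have hxeq : (fun i => if indeg A i = 0 then (0:ℝ) else x i) = x := by
      funext i
      split
      · exact (h0 i ‹_›).symm
      · rfl
    have heq : ∀ j, indeg A j ≠ 0 → indeg A j * x j = ∑ i, A i j * x i := by
      intro j hj
      have h1 := hx' j
      rw [hTapp, if_neg hj] at h1
      have h2 : ∑ i, A i j * (if indeg A i = 0 then 0 else x i) = ∑ i, A i j * x i :=
        Finset.sum_congr rfl fun i _ => by
          by_cases hi : indeg A i = 0 <;> simp [hi, h0 i]
      rw [h2] at h1
      linarith
    have h1 := maxle A hA hsfi x h0 heq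
    have h2 := maxle A hA hsfi (-x) (fun i hi => by simp [h0 i hi])
      (fun j hj => by
        simp only [Pi.neg_apply, mul_neg, Finset.sum_neg_distrib, neg_inj]
        exact heq j hj)
    funext j
    have := h2 j
    simp only [Pi.neg_apply, neg_nonpos] at this
    exact le_antisymm (h1 j) this
  have hTsurj : Function.Surjective T := by
    haveI : FiniteDimensional ℝ (Fin n → ℝ) := inferInstance
    exact (LinearMap.injective_iff_surjective).mp hTinj
  -- target vector
  set t : Fin n → ℝ := fun j => if h : indeg A j = 0 then c ⟨j, h⟩ else
      indeg A j + ∑ i, (if h : indeg A i = 0 then A i j * c ⟨i, h⟩ else 0) with ht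
  obtain ⟨x, hx⟩ := hTsurj t
  have hx' : ∀ j, T x j = t j := fun j => congrFun hx j
  have htval : ∀ (i : Fin n) (h : indeg A i = 0), t i = c ⟨i, h⟩ := by
    intro i h
    simp only [ht]
    exact dif_pos h
  have hsrc : ∀ (i : Fin n) (h : indeg A i = 0), x i = c ⟨i, h⟩ := by
    intro i h
    have h1 := hx' i
    rwa [hTapp, if_pos h, htval i h] at h1
  refine ⟨x, ?_, hsrc⟩
  funext j
  rw [inLapT_mulVec]
  by_cases hj : indeg A j = 0
  · -- source: all entries of column j vanish
    have hcol : ∀ i, A i j = 0 := by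
      intro i
      have : ∑ i, A i j = 0 := hj
      exact (Finset.sum_eq_zero_iff_of_nonneg (fun i _ => hA i j)).mp this i
        (Finset.mem_univ i)
    simp [hj, hcol]
  · have hTj := hx' j
    rw [hTapp, if_neg hj] at hTj
    simp only [ht, dif_neg hj] at hTj
    have hsplit : ∑ i, A i j * x i
        = ∑ i, A i j * (if indeg A i = 0 then 0 else x i)
          + ∑ i, (if h : indeg A i = 0 then A i j * c ⟨i, h⟩ else 0) := by
      rw [← Finset.sum_add_distrib]
      refine Finset.sum_congr rfl fun i _ => ?_
      by_cases hi : indeg A i = 0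
      · simp [hi, hsrc i hi]
      · simp [hi]
    rw [hsplit]
    linarith
end
end

section
/- Let A be a weighted directed graph on n vertices with n ≥ 2 that is weakly connected. Then the matrix M̃ = (Matrix.diagonal d̃ − A)ᵀ is invertible if and only if A is simply forward influenced. -/
open Matrix BigOperators

noncomputable section

variable {n : ℕ}

def dtil (A : Matrix (Fin n) (Fin n) ℝ) (j : Fin n) : ℝ :=
  if 0 < indeg A j then indeg A j else 1

def Mt (A : Matrix (Fin n) (Fin n) ℝ) : Matrix (Fin n) (Fin n) ℝ :=
  (Matrix.diagonal (dtil A) - A)ᵀ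

lemma Mt_apply (A : Matrix (Fin n) (Fin n) ℝ) (j i : Fin n) :
    Mt A j i = (if i = j then dtil A i else 0) - A i j := by
  simp [Mt, Matrix.diagonal_apply]

lemma mulVec_Mt (A : Matrix (Fin n) (Fin n) ℝ) (x : Fin n → ℝ) (j : Fin n) :
    (Mt A).mulVec x j = dtil A j * x j - ∑ i, A i j * x i := by
  simp only [Matrix.mulVec, dotProduct, Mt_apply, sub_mul, Finset.sum_sub_distrib]
  congr 1
  rw [Finset.sum_eq_single j] <;> simp +contextual

lemma indeg_nonneg (A : Matrix (Fin n) (Fin n) ℝ) (hA : ∀ i j, 0 ≤ A i j) (j : Fin n) :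
    0 ≤ indeg A j :=
  Finset.sum_nonneg fun i _ => hA i j

lemma source_zero (A : Matrix (Fin n) (Fin n) ℝ) (hA : ∀ i j, 0 ≤ A i j) {j : Fin n}
    (hj : indeg A j = 0) (i : Fin n) : A i j = 0 :=
  (Finset.sum_eq_zero_iff_of_nonneg (fun i _ => hA i j)).mp hj i (Finset.mem_univ i)

lemma indeg_pos_of_edge (A : Matrix (Fin n) (Fin n) ℝ) (hA : ∀ i j, 0 ≤ A i j) {k j : Fin n}
    (h : 0 < A k j) : 0 < indeg A j :=
  lt_of_lt_of_le h (Finset.single_le_sum (fun i _ => hA i j) (Finset.mem_univ k))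

lemma prop_edge (A : Matrix (Fin n) (Fin n) ℝ) (hA : ∀ i j, 0 ≤ A i j)
    {x : Fin n → ℝ} (hx : (Mt A).mulVec x = 0) {k j : Fin n} (hk : 0 < A k j)
    (hj : ∀ i, x i ≤ x j) : x k = x j := by
  have hd : 0 < indeg A j := indeg_pos_of_edge A hA hk
  have heq : dtil A j * x j - ∑ i, A i j * x i = 0 := by
    rw [← mulVec_Mt, hx]; rfl
  rw [dtil, if_pos hd] at heq
  have hsum : ∑ i, A i j * (x j - x i) = 0 := by
    have h2 : indeg A j * x j = ∑ i, A i j * x j := by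
      rw [indeg, Finset.sum_mul]
    simp only [mul_sub, Finset.sum_sub_distrib, ← h2]
    linarith
  have hterm : A k j * (x j - x k) = 0 :=
    (Finset.sum_eq_zero_iff_of_nonneg
      (fun i _ => mul_nonneg (hA i j) (by linarith [hj i]))).mp hsum k (Finset.mem_univ k)
  rcases mul_eq_zero.mp hterm with h | h
  · exact absurd h (ne_of_gt hk)
  · linarith

lemma ker_nonpos (A : Matrix (Fin n) (Fin n) ℝ) (hA : ∀ i j, 0 ≤ A i j)
    (hSFI : (∃ i, indeg A i = 0) ∧ (∃ i, indeg A i ≠ 0) ∧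
      ∀ j, indeg A j ≠ 0 → ∃ i, indeg A i = 0 ∧ Reaches A i j)
    [NeZero n] {x : Fin n → ℝ} (hx : (Mt A).mulVec x = 0) (i : Fin n) : x i ≤ 0 := by
  by_contra hpos
  push_neg at hpos
  obtain ⟨j, -, hj⟩ := Finset.exists_max_image Finset.univ x ⟨i, Finset.mem_univ i⟩
  have hj' : ∀ k, x k ≤ x j := fun k => hj k (Finset.mem_univ k)
  have hxj : 0 < x j := lt_of_lt_of_le hpos (hj' i)
  have hreach : ∀ b, Reaches A b j → x b = x j := by
    intro b hb
    induction hb using Relation.ReflTransGen.head_induction_on with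
    | refl => rfl
    | head hac _ ih =>
      rename_i a c _
      have hc : ∀ i, x i ≤ x c := by intro i; rw [ih]; exact hj' i
      rw [prop_edge A hA hx hac hc, ih]
  have hsrc : ∀ s, indeg A s = 0 → x s = 0 := by
    intro s hs
    have heq : dtil A s * x s - ∑ i, A i s * x i = 0 := by
      rw [← mulVec_Mt, hx]; rfl
    have h0 : ∑ i, A i s * x i = 0 :=
      Finset.sum_eq_zero fun i _ => by rw [source_zero A hA hs i, zero_mul]
    rw [dtil, hs, if_neg (lt_irrefl 0), one_mul, h0, sub_zero] at heq
    exact heq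
  have hjns : indeg A j ≠ 0 := fun h => absurd (hsrc j h) (ne_of_gt hxj)
  obtain ⟨s, hs, hsj⟩ := hSFI.2.2 j hjns
  have h := hreach s hsj
  rw [hsrc s hs] at h
  exact absurd h.symm (ne_of_gt hxj)

private theorem stmt_3_aux (hn : 2 ≤ n) (A : Matrix (Fin n) (Fin n) ℝ)
    (hA : ∀ i j, 0 ≤ A i j) (hdiag : ∀ i, A i i = 0)
    (hwc : ∀ i j : Fin n, Relation.ReflTransGen (fun i j => 0 < A i j ∨ 0 < A j i) i j) :
    IsUnit ((Matrix.diagonal (fun j => if 0 < indeg A j then indeg A j else 1) - A)ᵀ) ↔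
      ((∃ i, indeg A i = 0) ∧ (∃ i, indeg A i ≠ 0) ∧
        ∀ j, indeg A j ≠ 0 → ∃ i, indeg A i = 0 ∧ Reaches A i j) := by
  haveI : NeZero n := ⟨by omega⟩
  have hMt : (Matrix.diagonal (fun j => if 0 < indeg A j then indeg A j else 1) - A)ᵀ = Mt A := rfl
  rw [hMt]
  constructor
  · intro hU
    have hdet : (Mt A).det ≠ 0 := by
      intro h
      exact (isUnit_iff_ne_zero.mp ((Matrix.isUnit_iff_isUnit_det _).mp hU)) h
    have hb : ∃ i, indeg A i ≠ 0 := by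
      by_contra h
      push_neg at h
      have hA0 : ∀ i j, A i j = 0 := fun i j => source_zero A hA (h j) i
      have h01 : (⟨0, by omega⟩ : Fin n) ≠ ⟨1, by omega⟩ := by
        simp [Fin.ext_iff]
      rcases (hwc ⟨0, by omega⟩ ⟨1, by omega⟩).cases_head with h' | ⟨c, hc, -⟩
      · exact h01 h'
      · rcases hc with h' | h' <;> simp [hA0] at h'
    have ha : ∃ i, indeg A i = 0 := by
      by_contra h
      push_neg at h
      have h1 : (Mt A).mulVec 1 = 0 := by
        funext j
        rw [mulVec_Mt, dtil, if_pos ((indeg_nonneg A hA j).lt_of_ne (Ne.symm (h j)))]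
        simp [indeg]
      refine hdet ((Matrix.exists_mulVec_eq_zero_iff).mp ⟨1, ?_, h1⟩)
      intro h0
      have := congrFun h0 ⟨0, by omega⟩
      norm_num at this
    refine ⟨ha, hb, ?_⟩
    intro j0 hj0
    by_contra hc
    push_neg at hc
    classical
    set P : Fin n → Prop := fun k => ¬ ∃ s, indeg A s = 0 ∧ Reaches A s k with hP
    have hPj0 : P j0 := by
      rintro ⟨s, hs, hr⟩
      exact hc s hs hr
    have hPns : ∀ k, P k → 0 < indeg A k := by
      intro k hk
      rcases (indeg_nonneg A hA k).lt_or_eq with h | h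
      · exact h
      · exact absurd ⟨k, h.symm, Relation.ReflTransGen.refl⟩ hk
    have hclos : ∀ i k, P k → ¬ P i → A i k = 0 := by
      intro i k hk hi
      by_contra hne
      have hik : 0 < A i k := (hA i k).lt_of_ne (Ne.symm hne)
      obtain ⟨s, hs, hr⟩ : ∃ s, indeg A s = 0 ∧ Reaches A s i := not_not.mp hi
      exact hk ⟨s, hs, hr.tail hik⟩
    -- sums over the subtype
    have hsub : ∀ g : Fin n → ℝ, (∀ j, ¬ P j → g j = 0) →
        ∑ j, g j = ∑ j : {k // P k}, g j.val := by
      intro g hg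
      rw [← Finset.sum_subtype (Finset.univ.filter P) (fun x => by simp) g]
      exact (Finset.sum_subset (Finset.filter_subset _ _)
        (fun j _ hj => hg j (by simpa using hj))).symm
    set B : Matrix {k // P k} {k // P k} ℝ :=
      (Mt A).submatrix Subtype.val Subtype.val with hB
    haveI : Nonempty {k // P k} := ⟨⟨j0, hPj0⟩⟩
    have hB1 : B.mulVec 1 = 0 := by
      funext k
      have e1 : B.mulVec 1 k = ∑ i : {k // P k}, Mt A k.val i.val := by
        simp [hB, Matrix.mulVec, dotProduct]
      have e2 : ∑ i, Mt A k.val i = 0 := by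
        have : ∑ i, Mt A k.val i = dtil A k.val - indeg A k.val := by
          simp only [Mt_apply, Finset.sum_sub_distrib, Finset.sum_ite_eq',
            Finset.mem_univ, if_true, indeg]
        rw [this, dtil, if_pos (hPns k.val k.2)]
        · ring
      have e3 : ∑ i : {k // P k}, Mt A k.val i.val = ∑ i, Mt A k.val i := by
        refine (hsub (fun i => Mt A k.val i) ?_).symm
        intro i hi
        show Mt A k.val i = 0
        rw [Mt_apply, hclos i k.val k.2 hi, if_neg, sub_zero]
        intro h
        exact hi (h ▸ k.2)
      rw [e1, e3, e2]; rfl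
    have hdetB : B.det = 0 := by
      refine (Matrix.exists_mulVec_eq_zero_iff).mp ⟨1, ?_, hB1⟩
      intro h0
      have := congrFun h0 ⟨j0, hPj0⟩
      norm_num at this
    obtain ⟨c, hc0, hcv⟩ : ∃ c ≠ 0, Bᵀ.mulVec c = 0 := by
      refine (Matrix.exists_mulVec_eq_zero_iff).mpr ?_
      rw [Matrix.det_transpose]; exact hdetB
    set c' : Fin n → ℝ := fun i => if h : P i then c ⟨i, h⟩ else 0 with hc'
    have hc'eq : ∀ k : {k // P k}, c' k.val = c k := by
      intro k
      simp only [hc']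
      rw [dif_pos k.2, Subtype.coe_eta]
    have hc'0 : c' ≠ 0 := by
      obtain ⟨k, hk⟩ := Function.ne_iff.mp hc0
      intro h
      apply hk
      have h2 := congrFun h k.val
      rw [hc'eq k] at h2
      exact h2
    have hvm : Matrix.vecMul c' (Mt A) = 0 := by
      funext i
      have hz : ∀ j, ¬ P j → c' j * Mt A j i = 0 := by
        intro j hj
        simp only [hc']
        rw [dif_neg hj, zero_mul]
      have e1 : Matrix.vecMul c' (Mt A) i = ∑ j : {k // P k}, c' j.val * Mt A j.val i := by
        rw [Matrix.vecMul, dotProduct]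
        exact hsub (fun j => c' j * Mt A j i) hz
      rw [e1]
      by_cases hi : P i
      · have h4 := congrFun hcv ⟨i, hi⟩
        rw [Matrix.mulVec, dotProduct] at h4
        simp only [Pi.zero_apply] at h4
        refine Eq.trans ?_ h4
        apply Finset.sum_congr rfl
        intro j _
        rw [hc'eq j, Matrix.transpose_apply, hB, Matrix.submatrix_apply, mul_comm]
      · apply Finset.sum_eq_zero
        intro j _
        have h3 : Mt A j.val i = 0 := by
          rw [Mt_apply, hclos i j.val j.2 hi, if_neg, sub_zero]
          intro h
          exact hi (h ▸ j.2)
        rw [h3, mul_zero]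
    exact hdet ((Matrix.exists_vecMul_eq_zero_iff).mp ⟨c', hc'0, hvm⟩)
  · intro hSFI
    rw [Matrix.isUnit_iff_isUnit_det, isUnit_iff_ne_zero]
    intro hdet
    obtain ⟨v, hv, hv0⟩ := (Matrix.exists_mulVec_eq_zero_iff).mpr hdet
    have h1 : ∀ i, v i ≤ 0 := ker_nonpos A hA hSFI hv0
    have h2 : ∀ i, -v i ≤ 0 := by
      have hneg : (Mt A).mulVec (-v) = 0 := by rw [Matrix.mulVec_neg, hv0, neg_zero]
      exact fun i => ker_nonpos A hA hSFI hneg i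
    refine hv (funext fun i => ?_)
    have := h2 i
    simp only [Pi.zero_apply]
    linarith [h1 i]

theorem stmt_3 (hn : 2 ≤ n) (A : Matrix (Fin n) (Fin n) ℝ)
    (hA : ∀ i j, 0 ≤ A i j) (hdiag : ∀ i, A i i = 0)
    (hwc : WeaklyConnected A) :
    IsUnit ((Matrix.diagonal (fun j => if 0 < indeg A j then indeg A j else 1) - A)ᵀ) ↔
      SimplyForwardInfluenced A :=
  stmt_3_aux hn A hA hdiag hwc
end
end

section
/- Let A be a weighted directed graph on n vertices and let S be a minimal source subgraph of A. Then the subgraph induced on S is strongly connected: for all i, j ∈ S, the pair (i, j) lies in the reflexive-transitive closure of the edge relation restricted to S, i.e. of the relation fun i j => i ∈ S ∧ j ∈ S ∧ A i j > 0. -/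
open Matrix BigOperators

noncomputable section

variable {n : ℕ}

theorem stmt_5 (hn : 0 < n) (A : Matrix (Fin n) (Fin n) ℝ)
    (hA : ∀ i j, 0 ≤ A i j) (hdiag : ∀ i, A i i = 0)
    (S : Finset (Fin n)) (hS : MinSourceSubgraph A S) :
    ∀ i ∈ S, ∀ j ∈ S,
      Relation.ReflTransGen (fun a b => a ∈ S ∧ b ∈ S ∧ 0 < A a b) i j := by
  intro i hi j hj
  obtain ⟨hSne, hcl, hmin⟩ := hS
  set R := fun a b => a ∈ S ∧ b ∈ S ∧ 0 < A a b with hR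
  classical
  set T := S.filter (fun a => Relation.ReflTransGen R a j) with hT
  have hTsub : T ⊆ S := Finset.filter_subset _ _
  have hjT : j ∈ T := Finset.mem_filter.2 ⟨hj, Relation.ReflTransGen.refl⟩
  have hTcl : InClosed A T := by
    intro a b ha hb
    by_contra hab
    have hab' : 0 < A a b := lt_of_le_of_ne (hA a b) (Ne.symm hab)
    obtain ⟨hbS, hbr⟩ := Finset.mem_filter.1 hb
    have haS : a ∈ S := by
      by_contra haS
      exact hab (hcl a b haS hbS)
    exact ha (Finset.mem_filter.2 ⟨haS, Relation.ReflTransGen.head ⟨haS, hbS, hab'⟩ hbr⟩)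
  have hTS : T = S := by
    by_contra hne
    exact hmin T hTsub ⟨j, hjT⟩ hne hTcl
  have : i ∈ T := hTS ▸ hi
  exact (Finset.mem_filter.1 this).2
end
end

section
/- Let A be a weighted directed graph on n vertices that is weakly connected. Then A has a minimal source subgraph that is a proper subset of the vertex set Fin n (i.e. A is hierarchically decomposable) if and only if A is not strongly connected. -/
open Matrix BigOperators

noncomputable section

variable {n : ℕ}

lemma inclosed_mem_of_reaches {n : ℕ} {A : Matrix (Fin n) (Fin n) ℝ} {S : Finset (Fin n)}
    (hS : InClosed A S) {i j : Fin n} (h : Reaches A i j) (hj : j ∈ S) : i ∈ S := by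
  induction h with
  | refl => exact hj
  | @tail b c _ hbc ih =>
    apply ih
    by_contra hb
    exact absurd (hS _ _ hb hj) (ne_of_gt hbc)

lemma exists_min_source {n : ℕ} {A : Matrix (Fin n) (Fin n) ℝ} :
    ∀ S : Finset (Fin n), S.Nonempty → InClosed A S →
    ∃ T ⊆ S, MinSourceSubgraph A T := by
  intro S
  induction S using Finset.strongInduction with
  | _ S ih =>
    intro hne hcl
    by_cases h : ∀ T ⊆ S, T.Nonempty → T ≠ S → ¬ InClosed A T
    · exact ⟨S, subset_rfl, hne, hcl, h⟩
    · push_neg at h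
      obtain ⟨T, hTS, hTne, hTneq, hTcl⟩ := h
      obtain ⟨T', hT', hmin⟩ := ih T (hTS.ssubset_of_ne hTneq) hTne hTcl
      exact ⟨T', hT'.trans hTS, hmin⟩

theorem stmt_6 (hn : 0 < n) (A : Matrix (Fin n) (Fin n) ℝ)
    (hA : ∀ i j, 0 ≤ A i j) (hdiag : ∀ i, A i i = 0)
    (hwc : WeaklyConnected A) :
    (∃ S : Finset (Fin n), MinSourceSubgraph A S ∧ S ≠ Finset.univ) ↔
      ¬ StronglyConnected A := by
  classical
  constructor
  · rintro ⟨S, ⟨hne, hcl, _⟩, hSuniv⟩ hsc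
    obtain ⟨j, hj⟩ := hne
    obtain ⟨i, hi⟩ : ∃ i, i ∉ S := by
      by_contra h; push_neg at h; exact hSuniv (Finset.eq_univ_iff_forall.mpr h)
    exact hi (inclosed_mem_of_reaches hcl (hsc i j) hj)
  · intro hns
    simp only [StronglyConnected, not_forall] at hns
    obtain ⟨i, j, hij⟩ := hns
    set Sj : Finset (Fin n) := Finset.univ.filter (fun k => Reaches A k j) with hSj
    have hjSj : j ∈ Sj :=
      Finset.mem_filter.mpr ⟨Finset.mem_univ j, Relation.ReflTransGen.refl⟩
    have hiSj : i ∉ Sj := by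
      simp [hSj, hij]
    have hclSj : InClosed A Sj := by
      intro a b ha hb
      by_contra hab
      apply ha
      simp only [hSj, Finset.mem_filter, Finset.mem_univ, true_and] at hb ⊢
      have hab' : Reaches A a b :=
        Relation.ReflTransGen.single (lt_of_le_of_ne (hA a b) (Ne.symm hab))
      exact hab'.trans hb
    obtain ⟨T, hTS, hmin⟩ := exists_min_source Sj ⟨j, hjSj⟩ hclSj
    refine ⟨T, hmin, ?_⟩
    intro hT
    exact hiSj (hTS (hT ▸ Finset.mem_univ i))
end
end

section
/- Let A be a weighted directed graph on n vertices that is weakly connected. Then A has a minimal source subgraph that is a proper subset of the vertex set Fin n if and only if the transposed graph Aᵀ has a minimal source subgraph that is a proper subset of Fin n (i.e. A is hierarchically decomposable if and only if Aᵀ is hierarchically decomposable). -/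
open Matrix BigOperators

noncomputable section

variable {n : ℕ}

lemma inClosed_compl_transpose (A : Matrix (Fin n) (Fin n) ℝ) (S : Finset (Fin n)) :
    InClosed A S ↔ InClosed Aᵀ Sᶜ := by
  constructor
  · intro h i j hi hj
    simp only [Finset.mem_compl, not_not] at hi hj
    exact h j i hj hi
  · intro h i j hi hj
    exact h j i (by simp [hj]) (by simp [hi])

lemma exists_minSource (A : Matrix (Fin n) (Fin n) ℝ)
    (h : ∃ S : Finset (Fin n), S.Nonempty ∧ InClosed A S ∧ S ≠ Finset.univ) :
    ∃ S : Finset (Fin n), MinSourceSubgraph A S ∧ S ≠ Finset.univ := by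
  obtain ⟨S₀, hne, hcl, hprop⟩ := h
  classical
  set 𝒮 := (S₀.powerset).filter (fun T => T.Nonempty ∧ InClosed A T) with h𝒮
  have hS₀ : S₀ ∈ 𝒮 := by
    simp [h𝒮, Finset.mem_filter, hne, hcl]
  obtain ⟨T, hT, hmin⟩ := Finset.exists_min_image 𝒮 Finset.card ⟨S₀, hS₀⟩
  simp only [h𝒮, Finset.mem_filter, Finset.mem_powerset] at hT
  obtain ⟨hTsub, hTne, hTcl⟩ := hT
  refine ⟨T, ⟨hTne, hTcl, ?_⟩, ?_⟩
  · intro U hU hUne hUneq hUcl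
    have hUmem : U ∈ 𝒮 := by
      simp only [h𝒮, Finset.mem_filter, Finset.mem_powerset]
      exact ⟨hU.trans hTsub, hUne, hUcl⟩
    have := hmin U hUmem
    have : U.card < T.card := Finset.card_lt_card (ssubset_of_subset_of_ne hU hUneq)
    omega
  · intro hTu
    exact hprop (Finset.univ_subset_iff.mp (hTu ▸ hTsub))

theorem stmt_7 (hn : 0 < n) (A : Matrix (Fin n) (Fin n) ℝ)
    (hA : ∀ i j, 0 ≤ A i j) (hdiag : ∀ i, A i i = 0)
    (hwc : WeaklyConnected A) :
    (∃ S : Finset (Fin n), MinSourceSubgraph A S ∧ S ≠ Finset.univ) ↔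
      (∃ S : Finset (Fin n), MinSourceSubgraph Aᵀ S ∧ S ≠ Finset.univ) := by
  have key : ∀ (B : Matrix (Fin n) (Fin n) ℝ),
      (∃ S : Finset (Fin n), MinSourceSubgraph B S ∧ S ≠ Finset.univ) →
      (∃ S : Finset (Fin n), MinSourceSubgraph Bᵀ S ∧ S ≠ Finset.univ) := by
    intro B ⟨S, ⟨hne, hcl, _⟩, hprop⟩
    apply exists_minSource
    refine ⟨Sᶜ, ?_, (inClosed_compl_transpose B S).mp hcl, ?_⟩
    · rw [← Finset.card_pos, Finset.card_compl]
      have : S.card < Finset.univ.card := Finset.card_lt_card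
        (lt_of_le_of_ne (Finset.subset_univ S) hprop)
      simp at this ⊢
      omega
    · intro h
      have : S = ∅ := by
        have := congrArg (fun T => Tᶜ) h
        simpa using this
      exact hne.ne_empty this
  constructor
  · exact key A
  · intro h
    have := key Aᵀ h
    simpa using this
end
end

section
/- Let A be a weighted directed graph on n vertices that is weakly connected, and let S₁, …, S_l be its pairwise distinct minimal source subgraphs. Then the kernel of L, the subspace {x : Fin n → ℝ | L.mulVec x = 0} of ℝⁿ, has dimension l and admits a basis k₁, …, k_l in which each k_m satisfies k_m i > 0 for i ∈ S_m and k_m i = 0 for i ∉ S_m; in particular the k_m are pairwise orthogonal nonnegative vectors. -/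
open Matrix BigOperators

noncomputable section

variable {n : ℕ}

/-! The Laplacian `L = diag d - A` has zero column sums, `1ᵀ L = 0`. For a minimal source `S`,
in-closedness makes `L` preserve the vectors supported on `S`; since `1ᵀ L = 0`, this restriction
is not surjective, hence has a nonzero kernel vector `x`. The triangle inequality gives `L |x| ≤ 0`
entrywise, and `1ᵀ L |x| = 0` upgrades this to `L |x| = 0`. The support of a nonnegative kernel
vector is in-closed, so by minimality `|x| > 0` on all of `S`. Distinct minimal sources are
disjoint, so these `l` vectors are linearly independent.

Conversely, `(Lᵀ y)_j = ∑ᵢ A i j (y j - y i)`, so for `Lᵀ y = 0` the set where `y` is maximal is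
in-closed and contains a minimal source. Hence a vector of `ker Lᵀ` vanishing at one point of each
minimal source vanishes identically, and `dim ker L = dim ker Lᵀ ≤ l`. -/

lemma linearIndependent_of_apply_ne_zero_of_apply_eq_zero {ι κ K : Type*} [Field K]
    {v : κ → ι → K} (p : κ → ι) (hdiag : ∀ m, v m (p m) ≠ 0)
    (hoff : ∀ m m', m ≠ m' → v m' (p m) = 0) : LinearIndependent K v := by
  classical
  rw [linearIndependent_iff']
  intro s g hg m hm
  have hpm := congrFun hg (p m)
  simp only [Finset.sum_apply, Pi.smul_apply, smul_eq_mul, Pi.zero_apply] at hpm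
  rw [Finset.sum_eq_single_of_mem m hm fun m' _ hne => by rw [hoff m m' hne.symm, mul_zero]] at hpm
  exact (mul_eq_zero.mp hpm).resolve_right (hdiag m)

lemma finrank_ker_mulVecLin_transpose {ι K : Type*} [Fintype ι] [DecidableEq ι] [Field K]
    (M : Matrix ι ι K) :
    Module.finrank K (LinearMap.ker Mᵀ.mulVecLin) = Module.finrank K (LinearMap.ker M.mulVecLin) := by
  have h := LinearMap.finrank_range_add_finrank_ker M.mulVecLin
  have hT := LinearMap.finrank_range_add_finrank_ker Mᵀ.mulVecLin
  have hrank : Mᵀ.rank = M.rank := M.rank_transpose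
  simp only [Matrix.rank] at hrank
  omega

lemma LinearMap.exists_ne_zero_apply_eq_zero_of_comp_eq_zero {K V : Type*} [Field K]
    [AddCommGroup V] [Module K V] [FiniteDimensional K V] {f : V →ₗ[K] V} {φ : V →ₗ[K] K}
    (hφ : φ ≠ 0) (hφf : φ ∘ₗ f = 0) : ∃ v ≠ 0, f v = 0 := by
  by_contra! hf
  have hsurj : Function.Surjective f :=
    LinearMap.injective_iff_surjective.mp ((injective_iff_map_eq_zero f).mpr fun v hv =>
      not_not.mp fun hv0 => hf v hv0 hv)
  refine hφ (LinearMap.ext fun v => ?_)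
  obtain ⟨w, rfl⟩ := hsurj v
  exact LinearMap.congr_fun hφf w

lemma inLap_mulVec_apply (A : Matrix (Fin n) (Fin n) ℝ) (x : Fin n → ℝ) (i : Fin n) :
    (inLap A *ᵥ x) i = indeg A i * x i - ∑ j, A i j * x j := by
  rw [inLap, sub_mulVec, Pi.sub_apply, mulVec_diagonal]
  rfl

lemma inLap_transpose_mulVec_apply (A : Matrix (Fin n) (Fin n) ℝ) (y : Fin n → ℝ) (j : Fin n) :
    ((inLap A)ᵀ *ᵥ y) j = ∑ i, A i j * (y j - y i) := by
  rw [inLap, transpose_sub, diagonal_transpose, sub_mulVec, Pi.sub_apply, mulVec_diagonal, indeg,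
    Finset.sum_mul]
  simp [mulVec, dotProduct, mul_sub, Finset.sum_sub_distrib]

lemma sum_inLap_mulVec (A : Matrix (Fin n) (Fin n) ℝ) (x : Fin n → ℝ) :
    ∑ i, (inLap A *ᵥ x) i = 0 := by
  have hcol : (inLap A)ᵀ *ᵥ 1 = 0 := funext fun j => by simp [inLap_transpose_mulVec_apply]
  calc ∑ i, (inLap A *ᵥ x) i = 1 ⬝ᵥ inLap A *ᵥ x := by simp [dotProduct]
    _ = 0 := by rw [dotProduct_mulVec, ← mulVec_transpose, hcol, zero_dotProduct]

section Laplacian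

variable {A : Matrix (Fin n) (Fin n) ℝ}

lemma InClosed.inter {S T : Finset (Fin n)} (hS : InClosed A S) (hT : InClosed A T) :
    InClosed A (S ∩ T) := by
  intro i j hi hj
  rw [Finset.mem_inter] at hi hj
  by_cases hiS : i ∈ S
  · exact hT i j (fun hiT => hi ⟨hiS, hiT⟩) hj.2
  · exact hS i j hiS hj.1

lemma InClosed.exists_minSourceSubgraph_subset {T : Finset (Fin n)} (hT : InClosed A T)
    (hTne : T.Nonempty) : ∃ S ⊆ T, MinSourceSubgraph A S := by
  classical
  obtain ⟨S, hSmem, hSmin⟩ := Finset.exists_minimal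
    (s := T.powerset.filter fun S => S.Nonempty ∧ InClosed A S) ⟨T, by simp [hTne, hT]⟩
  simp only [Finset.mem_filter, Finset.mem_powerset] at hSmem hSmin
  refine ⟨S, hSmem.1, hSmem.2.1, hSmem.2.2, fun U hUS hUne hUS' hU => hUS' ?_⟩
  exact le_antisymm hUS (hSmin ⟨hUS.trans hSmem.1, hUne, hU⟩ hUS)

lemma MinSourceSubgraph.disjoint {S T : Finset (Fin n)} (hS : MinSourceSubgraph A S)
    (hT : MinSourceSubgraph A T) (hST : S ≠ T) : Disjoint S T := by
  rw [Finset.disjoint_iff_ne]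
  rintro i hiS _ hiT rfl
  have hne : (S ∩ T).Nonempty := ⟨i, Finset.mem_inter.mpr ⟨hiS, hiT⟩⟩
  have hcl := hS.2.1.inter hT.2.1
  have hS' : S ∩ T = S := not_not.mp fun h => hS.2.2 _ Finset.inter_subset_left hne h hcl
  have hT' : S ∩ T = T := not_not.mp fun h => hT.2.2 _ Finset.inter_subset_right hne h hcl
  exact hST (hS'.symm.trans hT')

lemma InClosed.exists_ne_zero_mem_ker {S : Finset (Fin n)} (hS : InClosed A S)
    (hSne : S.Nonempty) : ∃ x ≠ 0, (∀ i ∉ S, x i = 0) ∧ inLap A *ᵥ x = 0 := by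
  classical
  let V : Submodule ℝ (Fin n → ℝ) := Submodule.pi (↑S)ᶜ fun _ => ⊥
  have hV {x : Fin n → ℝ} : x ∈ V ↔ ∀ i ∉ S, x i = 0 := by simp [V, Submodule.mem_pi]
  have hLV : ∀ x ∈ V, (inLap A).mulVecLin x ∈ V := fun x hx => hV.mpr fun i hi => by
    rw [mulVecLin_apply, inLap_mulVec_apply, hV.mp hx i hi, mul_zero, zero_sub, neg_eq_zero]
    refine Finset.sum_eq_zero fun j _ => ?_
    by_cases hj : j ∈ S
    · rw [hS i j hi hj, zero_mul]
    · rw [hV.mp hx j hj, mul_zero]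
  let φ : V →ₗ[ℝ] ℝ := (∑ i, LinearMap.proj i) ∘ₗ V.subtype
  have hφ : φ ≠ 0 := by
    obtain ⟨i₀, hi₀⟩ := hSne
    have hsingle : Pi.single i₀ 1 ∈ V := hV.mpr fun i hi => Pi.single_eq_of_ne (by grind) _
    intro h
    simpa [φ] using LinearMap.congr_fun h ⟨_, hsingle⟩
  have hφL : φ ∘ₗ (inLap A).mulVecLin.restrict hLV = 0 := LinearMap.ext fun x => by
    simp only [φ, LinearMap.comp_apply, LinearMap.coe_sum, Finset.sum_apply, LinearMap.proj_apply,
      Submodule.subtype_apply, LinearMap.coe_restrict_apply, mulVecLin_apply, LinearMap.zero_apply]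
    exact sum_inLap_mulVec A x
  obtain ⟨x, hx0, hx⟩ := LinearMap.exists_ne_zero_apply_eq_zero_of_comp_eq_zero hφ hφL
  exact ⟨x, by simpa using hx0, hV.mp x.2, by
    simpa only [LinearMap.coe_restrict_apply, mulVecLin_apply, ZeroMemClass.coe_zero] using
      congrArg Subtype.val hx⟩

lemma inLap_mulVec_abs_eq_zero (hA : ∀ i j, 0 ≤ A i j) {x : Fin n → ℝ}
    (hx : inLap A *ᵥ x = 0) : inLap A *ᵥ |x| = 0 := by
  have hle : ∀ i, (inLap A *ᵥ |x|) i ≤ 0 := by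
    intro i
    have hxi : indeg A i * x i = ∑ j, A i j * x j := by
      simpa [inLap_mulVec_apply, sub_eq_zero] using congrFun hx i
    have hd : 0 ≤ indeg A i := Finset.sum_nonneg fun j _ => hA j i
    calc (inLap A *ᵥ |x|) i = |∑ j, A i j * x j| - ∑ j, A i j * |x j| := by
          rw [inLap_mulVec_apply, ← hxi, abs_mul, abs_of_nonneg hd, Pi.abs_apply]; simp
      _ ≤ 0 := sub_nonpos.mpr <| (Finset.abs_sum_le_sum_abs _ _).trans_eq <|
          Finset.sum_congr rfl fun j _ => by rw [abs_mul, abs_of_nonneg (hA i j)]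
  exact funext fun i => (Finset.sum_eq_zero_iff_of_nonpos fun i _ => hle i).mp
    (sum_inLap_mulVec A _) i (Finset.mem_univ i)

lemma inClosed_pos_of_inLap_mulVec_eq_zero (hA : ∀ i j, 0 ≤ A i j) {y : Fin n → ℝ}
    (hy0 : 0 ≤ y) (hy : inLap A *ᵥ y = 0) : InClosed A {i | 0 < y i} := by
  intro i j hi hj
  simp only [Finset.mem_filter, Finset.mem_univ, true_and, not_lt] at hi hj
  have hyi : y i = 0 := le_antisymm hi (hy0 i)
  have hsum : ∑ j, A i j * y j = 0 := by
    simpa [inLap_mulVec_apply, hyi] using congrFun hy i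
  have := (Finset.sum_eq_zero_iff_of_nonneg fun j _ => mul_nonneg (hA i j) (hy0 j)).mp hsum j
    (Finset.mem_univ j)
  exact (mul_eq_zero.mp this).resolve_right hj.ne'

lemma MinSourceSubgraph.exists_pos_mem_ker (hA : ∀ i j, 0 ≤ A i j) {S : Finset (Fin n)}
    (hS : MinSourceSubgraph A S) :
    ∃ k : Fin n → ℝ, inLap A *ᵥ k = 0 ∧ (∀ i ∈ S, 0 < k i) ∧ ∀ i ∉ S, k i = 0 := by
  obtain ⟨x, hx0, hxS, hx⟩ := hS.2.1.exists_ne_zero_mem_ker hS.1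
  have hk := inLap_mulVec_abs_eq_zero hA hx
  have hsupp : ({i | 0 < |x| i} : Finset (Fin n)) ⊆ S := fun i hi => by
    by_contra hiS
    simp [hxS i hiS] at hi
  have hsuppne : ({i | 0 < |x| i} : Finset (Fin n)).Nonempty := by
    obtain ⟨i, hi⟩ := Function.ne_iff.mp hx0
    exact ⟨i, by simpa using hi⟩
  have hsuppS := not_not.mp fun h => hS.2.2 _ hsupp hsuppne h
    (inClosed_pos_of_inLap_mulVec_eq_zero hA (fun i => abs_nonneg (x i)) hk)
  refine ⟨|x|, hk, fun i hi => ?_, fun i hi => by simp [hxS i hi]⟩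
  rw [← hsuppS] at hi
  simpa using hi

lemma inClosed_isMax_of_inLap_transpose_mulVec_eq_zero (hA : ∀ i j, 0 ≤ A i j) {y : Fin n → ℝ}
    (hy : (inLap A)ᵀ *ᵥ y = 0) : InClosed A {j | ∀ i, y i ≤ y j} := by
  intro i j hi hj
  simp only [Finset.mem_filter, Finset.mem_univ, true_and, not_forall, not_le] at hi hj
  obtain ⟨i', hii'⟩ := hi
  have hsum : ∑ i, A i j * (y j - y i) = 0 := by
    rw [← inLap_transpose_mulVec_apply, hy, Pi.zero_apply]
  have := (Finset.sum_eq_zero_iff_of_nonneg fun i _ => mul_nonneg (hA i j)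
    (sub_nonneg.mpr (hj i))).mp hsum i (Finset.mem_univ i)
  exact (mul_eq_zero.mp this).resolve_right (sub_pos.mpr (hii'.trans_le (hj i'))).ne'

lemma le_zero_of_inLap_transpose_mulVec_eq_zero (hA : ∀ i j, 0 ≤ A i j) {y : Fin n → ℝ}
    (hy : (inLap A)ᵀ *ᵥ y = 0) (hmin : ∀ S, MinSourceSubgraph A S → ∃ i ∈ S, y i ≤ 0)
    (j : Fin n) : y j ≤ 0 := by
  obtain ⟨j₀, -, hj₀⟩ := Finset.exists_max_image Finset.univ y ⟨j, Finset.mem_univ j⟩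
  have hmaxne : ({j | ∀ i, y i ≤ y j} : Finset (Fin n)).Nonempty := ⟨j₀, by simpa using hj₀⟩
  obtain ⟨S, hSmax, hS⟩ := (inClosed_isMax_of_inLap_transpose_mulVec_eq_zero hA hy)
    |>.exists_minSourceSubgraph_subset hmaxne
  obtain ⟨i, hiS, hi⟩ := hmin S hS
  have hmax : ∀ i', y i' ≤ y i := by simpa using hSmax hiS
  exact (hmax j).trans hi

lemma eq_zero_of_inLap_transpose_mulVec_eq_zero (hA : ∀ i j, 0 ≤ A i j) {y : Fin n → ℝ}
    (hy : (inLap A)ᵀ *ᵥ y = 0) (hmin : ∀ S, MinSourceSubgraph A S → ∃ i ∈ S, y i = 0) :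
    y = 0 := by
  have hneg : (inLap A)ᵀ *ᵥ -y = 0 := by rw [mulVec_neg, hy, neg_zero]
  funext j
  refine le_antisymm (le_zero_of_inLap_transpose_mulVec_eq_zero hA hy (fun S hS => ?_) j)
    (neg_nonpos.mp (le_zero_of_inLap_transpose_mulVec_eq_zero hA hneg (fun S hS => ?_) j))
  all_goals
    obtain ⟨i, hiS, hi⟩ := hmin S hS
    exact ⟨i, hiS, by simp [hi]⟩

lemma finrank_ker_inLap_le {κ : Type*} [Fintype κ] (hA : ∀ i j, 0 ≤ A i j) (p : κ → Fin n)
    (hp : ∀ S, MinSourceSubgraph A S → ∃ m, p m ∈ S) :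
    Module.finrank ℝ (LinearMap.ker (inLap A).mulVecLin) ≤ Fintype.card κ := by
  rw [← finrank_ker_mulVecLin_transpose]
  let Φ := (LinearMap.funLeft ℝ ℝ p).domRestrict (LinearMap.ker (inLap A)ᵀ.mulVecLin)
  have hΦ : Function.Injective Φ := by
    rw [← LinearMap.ker_eq_bot, LinearMap.ker_eq_bot']
    intro y hy
    refine Subtype.ext (eq_zero_of_inLap_transpose_mulVec_eq_zero hA y.2 fun S hS => ?_)
    obtain ⟨m, hm⟩ := hp S hS
    exact ⟨p m, hm, congrFun hy m⟩
  simpa using LinearMap.finrank_le_finrank_of_injective hΦ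

end Laplacian

theorem stmt_9_general (A : Matrix (Fin n) (Fin n) ℝ)
    (hA : ∀ i j, 0 ≤ A i j)
    (l : ℕ) (S : Fin l → Finset (Fin n)) (hinj : Function.Injective S)
    (hall : ∀ T : Finset (Fin n), MinSourceSubgraph A T ↔ ∃ m, T = S m) :
    Module.finrank ℝ (LinearMap.ker (Matrix.mulVecLin (inLap A))) = l ∧
    ∃ k : Fin l → (Fin n → ℝ),
      (∀ m, (inLap A).mulVec (k m) = 0) ∧
      (∀ m, ∀ i ∈ S m, 0 < k m i) ∧
      (∀ m, ∀ i ∉ S m, k m i = 0) ∧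
      LinearIndependent ℝ k ∧
      Submodule.span ℝ (Set.range k) = LinearMap.ker (Matrix.mulVecLin (inLap A)) := by
  have hS m : MinSourceSubgraph A (S m) := (hall _).mpr ⟨m, rfl⟩
  choose k hkL hkpos hkzero using fun m => (hS m).exists_pos_mem_ker hA
  choose p hp using fun m => (hS m).1
  have hind : LinearIndependent ℝ k :=
    linearIndependent_of_apply_ne_zero_of_apply_eq_zero p (fun m => (hkpos m _ (hp m)).ne')
      fun m m' hmm' => hkzero m' _ <| Finset.disjoint_left.mp
        ((hS m).disjoint (hS m') (hinj.ne hmm')) (hp m)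
  have hle : Module.finrank ℝ (LinearMap.ker (inLap A).mulVecLin) ≤ l := by
    simpa using finrank_ker_inLap_le hA p fun T hT => by
      obtain ⟨m, rfl⟩ := (hall T).mp hT
      exact ⟨m, hp m⟩
  have hspan : Submodule.span ℝ (Set.range k) = LinearMap.ker (inLap A).mulVecLin := by
    refine Submodule.eq_of_le_of_finrank_le (Submodule.span_le.mpr ?_) ?_
    · rintro - ⟨m, rfl⟩
      exact hkL m
    · simpa [finrank_span_eq_card hind] using hle
  refine ⟨?_, k, hkL, hkpos, hkzero, hind, hspan⟩
  rw [← hspan, finrank_span_eq_card hind, Fintype.card_fin]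

theorem stmt_9 (hn : 0 < n) (A : Matrix (Fin n) (Fin n) ℝ)
    (hA : ∀ i j, 0 ≤ A i j) (hdiag : ∀ i, A i i = 0)
    (hwc : WeaklyConnected A)
    (l : ℕ) (S : Fin l → Finset (Fin n)) (hinj : Function.Injective S)
    (hall : ∀ T : Finset (Fin n), MinSourceSubgraph A T ↔ ∃ m, T = S m) :
    Module.finrank ℝ (LinearMap.ker (Matrix.mulVecLin (inLap A))) = l ∧
    ∃ k : Fin l → (Fin n → ℝ),
      (∀ m, (inLap A).mulVec (k m) = 0) ∧
      (∀ m, ∀ i ∈ S m, 0 < k m i) ∧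
      (∀ m, ∀ i ∉ S m, k m i = 0) ∧
      LinearIndependent ℝ k ∧
      Submodule.span ℝ (Set.range k) = LinearMap.ker (Matrix.mulVecLin (inLap A)) :=
  stmt_9_general A hA l S hinj hall
end
end

section
/- Let A be a weighted directed graph on n vertices, let S be a minimal source subgraph of A, and let k : Fin n → ℝ be a vector with L.mulVec k = 0, k i > 0 for i ∈ S and k i = 0 for i ∉ S. Then ∑ i, k i * d i = 0 if S is a singleton, and ∑ i, k i * d i > 0 if S has at least two elements. -/
open Matrix BigOperators

noncomputable section

variable {n : ℕ}

theorem stmt_10 (hn : 0 < n) (A : Matrix (Fin n) (Fin n) ℝ)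
    (hA : ∀ i j, 0 ≤ A i j) (hdiag : ∀ i, A i i = 0)
    (S : Finset (Fin n)) (hS : MinSourceSubgraph A S)
    (k : Fin n → ℝ) (hk0 : (inLap A).mulVec k = 0)
    (hkpos : ∀ i ∈ S, 0 < k i) (hkz : ∀ i ∉ S, k i = 0) :
    (S.card = 1 → ∑ i, k i * indeg A i = 0) ∧
    (2 ≤ S.card → 0 < ∑ i, k i * indeg A i) := by
  obtain ⟨hne, hcl, hmin⟩ := hS
  constructor
  · intro hcard
    obtain ⟨s, hs⟩ := Finset.card_eq_one.mp hcard
    subst hs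
    apply Finset.sum_eq_zero
    intro i _
    by_cases hi : i ∈ ({s} : Finset (Fin n))
    · have : i = s := Finset.mem_singleton.mp hi
      subst this
      have : indeg A i = 0 := by
        apply Finset.sum_eq_zero
        intro j _
        by_cases hj : j = i
        · subst hj; exact hdiag j
        · apply hcl
          · simp [hj]
          · simp
      rw [this, mul_zero]
    · rw [hkz i hi, zero_mul]
  · intro hcard
    obtain ⟨s, hs⟩ := hne
    have hsub : ({s} : Finset (Fin n)) ⊆ S := Finset.singleton_subset_iff.mpr hs
    have hneq : ({s} : Finset (Fin n)) ≠ S := by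
      intro h
      rw [← h] at hcard
      simp at hcard
    have hncl := hmin {s} hsub ⟨s, Finset.mem_singleton_self s⟩ hneq
    rw [InClosed] at hncl
    push_neg at hncl
    obtain ⟨i, j, hiS, hjS, hAij⟩ := hncl
    have hj : j = s := Finset.mem_singleton.mp hjS
    rw [hj] at hAij
    have hApos : 0 < A i s := lt_of_le_of_ne (hA i s) (Ne.symm hAij)
    have hds : 0 < indeg A s := by
      refine lt_of_lt_of_le hApos ?_
      exact Finset.single_le_sum (fun j _ => hA j s) (Finset.mem_univ i)
    have hknn : ∀ i ∈ Finset.univ, 0 ≤ k i * indeg A i := by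
      intro i _
      apply mul_nonneg
      · by_cases hi : i ∈ S
        · exact (hkpos i hi).le
        · rw [hkz i hi]
      · exact Finset.sum_nonneg fun j _ => hA j i
    exact Finset.sum_pos' hknn ⟨s, Finset.mem_univ s,
      mul_pos (hkpos s hs) hds⟩
end
end

section
/- Let A be a weighted directed graph on n vertices that is weakly connected and balanced. Then A is strongly connected. -/
open Matrix BigOperators

noncomputable section

variable {n : ℕ}

theorem stmt_13 (hn : 0 < n) (A : Matrix (Fin n) (Fin n) ℝ)
    (hA : ∀ i j, 0 ≤ A i j) (hdiag : ∀ i, A i i = 0)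
    (hwc : WeaklyConnected A) (hbal : ∀ i, indeg A i = outdeg A i) :
    StronglyConnected A := by
  classical
  intro i j
  set S : Finset (Fin n) := Finset.univ.filter (fun j => Reaches A i j) with hS
  have hmemS : ∀ k, k ∈ S ↔ Reaches A i k := by simp [hS]
  have hout : ∀ k l, k ∈ S → 0 < A k l → l ∈ S := fun k l hk h =>
    (hmemS l).2 (((hmemS k).1 hk).tail h)
  have hzero1 : ∑ j ∈ S, ∑ k ∈ Sᶜ, A j k = 0 :=
    Finset.sum_eq_zero fun j hj => Finset.sum_eq_zero fun k hk => by
      by_contra h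
      exact (Finset.mem_compl.1 hk) (hout j k hj (lt_of_le_of_ne (hA j k) (Ne.symm h)))
  have hbalS : ∑ j ∈ S, indeg A j = ∑ j ∈ S, outdeg A j :=
    Finset.sum_congr rfl fun j _ => hbal j
  have hsplit : ∀ (f : Fin n → Fin n → ℝ),
      ∑ j ∈ S, ∑ k, f j k = ∑ j ∈ S, ∑ k ∈ S, f j k + ∑ j ∈ S, ∑ k ∈ Sᶜ, f j k := by
    intro f
    rw [← Finset.sum_add_distrib]
    exact Finset.sum_congr rfl fun j _ => (Finset.sum_add_sum_compl S _).symm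
  have hin0 : ∑ j ∈ S, ∑ k ∈ Sᶜ, A k j = 0 := by
    have h1 := hsplit (fun j k => A k j)
    have h2 := hsplit (fun j k => A j k)
    simp only [indeg, outdeg] at hbalS
    rw [h1, h2, hzero1, add_zero, Finset.sum_comm (s := S) (t := S)] at hbalS
    linarith
  have hzeroIn : ∀ k l, k ∉ S → l ∈ S → A k l = 0 := by
    intro k l hk hl
    have h1 := (Finset.sum_eq_zero_iff_of_nonneg
      (fun j _ => Finset.sum_nonneg fun k _ => hA k j)).1 hin0 l hl
    exact (Finset.sum_eq_zero_iff_of_nonneg (fun k _ => hA k l)).1 h1 k (Finset.mem_compl.2 hk)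
  have hiS : i ∈ S := (hmemS i).2 Relation.ReflTransGen.refl
  have hjS : j ∈ S := by
    have h := hwc i j
    induction h with
    | refl => exact hiS
    | tail hab hedge ih =>
      cases hedge with
      | inl h => exact hout _ _ ih h
      | inr h =>
        by_contra hb
        exact absurd (hzeroIn _ _ hb ih) (ne_of_gt h)
  exact (hmemS j).1 hjS
end
end

section
/- Let A be a weighted directed graph on n vertices that is weakly connected and balanced, with total edge weight W = ∑ i, ∑ j, A i j > 0. Then the forward and backward democracy coefficients both equal 1: η_f(A) = 1 and η_b(A) = 1. -/
/-!
In a balanced graph the total level change along edges, `∑ i, ∑ j, A i j * (g j - g i)`, equals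
`∑ j, d j * g j - ∑ i, δ i * g i = 0` for every vector `g`. The transpose of a
balanced graph is balanced, which gives the backward coefficient.
-/

open Matrix BigOperators

noncomputable section

variable {n : ℕ}

theorem indeg_transpose (A : Matrix (Fin n) (Fin n) ℝ) : indeg Aᵀ = outdeg A := rfl

theorem outdeg_transpose (A : Matrix (Fin n) (Fin n) ℝ) : outdeg Aᵀ = indeg A := rfl

theorem sum_mul_sub_eq_indeg_sub_outdeg (A : Matrix (Fin n) (Fin n) ℝ) (g : Fin n → ℝ) :
    ∑ i, ∑ j, A i j * (g j - g i) = ∑ j, indeg A j * g j - ∑ i, outdeg A i * g i := by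
  simp only [mul_sub, Finset.sum_sub_distrib, indeg, outdeg, Finset.sum_mul]
  rw [Finset.sum_comm]

theorem etaF_eq_one_of_balanced (A : Matrix (Fin n) (Fin n) ℝ)
    (hbal : ∀ i, indeg A i = outdeg A i) (g : Fin n → ℝ) : etaF A g = 1 := by
  rw [etaF, sum_mul_sub_eq_indeg_sub_outdeg, funext hbal, sub_self, zero_div, sub_zero]

theorem stmt_14_general (A : Matrix (Fin n) (Fin n) ℝ)
    (hbal : ∀ i, indeg A i = outdeg A i)
    (g γ : Fin n → ℝ) :
    etaF A g = 1 ∧ etaF Aᵀ γ = 1 := by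
  have hbalT : ∀ i, indeg Aᵀ i = outdeg Aᵀ i := fun i => by
    rw [indeg_transpose, outdeg_transpose, hbal]
  exact ⟨etaF_eq_one_of_balanced A hbal g, etaF_eq_one_of_balanced Aᵀ hbalT γ⟩

theorem stmt_14 (hn : 0 < n) (A : Matrix (Fin n) (Fin n) ℝ)
    (hA : ∀ i j, 0 ≤ A i j) (hdiag : ∀ i, A i i = 0)
    (hwc : WeaklyConnected A) (hbal : ∀ i, indeg A i = outdeg A i)
    (hW : 0 < totalWeight A)
    (g γ : Fin n → ℝ) (hg : IsFHL A g) (hγ : IsFHL Aᵀ γ) :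
    etaF A g = 1 ∧ etaF Aᵀ γ = 1 :=
  stmt_14_general A hbal g γ
end
end

section
/- Let A be a weighted directed graph on n vertices that is weakly connected with total edge weight W = ∑ i, ∑ j, A i j > 0. Then for every vertex i the forward influence centrality satisfies v_f(i) ≥ 0, and v_f(i) = 0 if and only if i belongs to no minimal source subgraph of A (i.e. i is forward influenced). -/
open Matrix BigOperators

noncomputable section

variable {n : ℕ}

lemma aux_mulVec (A : Matrix (Fin n) (Fin n) ℝ) (v : Fin n → ℝ) (i : Fin n) :
    (inLap A).mulVec v i = indeg A i * v i - ∑ j, A i j * v j := by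
  simp only [inLap, Matrix.mulVec, dotProduct, Matrix.sub_apply, Matrix.diagonal_apply,
    sub_mul, Finset.sum_sub_distrib, ite_mul, zero_mul]
  rw [Finset.sum_ite_eq Finset.univ i (fun j => indeg A i * v j)]
  simp

lemma aux_mulVecT (A : Matrix (Fin n) (Fin n) ℝ) (v : Fin n → ℝ) (i : Fin n) :
    (inLap A)ᵀ.mulVec v i = indeg A i * v i - ∑ k, A k i * v k := by
  simp only [inLap, Matrix.mulVec, dotProduct, Matrix.transpose_apply, Matrix.sub_apply,
    Matrix.diagonal_apply, sub_mul, Finset.sum_sub_distrib, ite_mul, zero_mul]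
  have : ∀ x : Fin n, (if x = i then indeg A x * v x else 0)
      = (if x = i then indeg A i * v i else 0) := by
    intro x; split <;> simp_all
  rw [Finset.sum_congr rfl (fun x _ => this x),
    Finset.sum_ite_eq' Finset.univ i (fun _ => indeg A i * v i)]
  simp

lemma aux_colsum (A : Matrix (Fin n) (Fin n) ℝ) (j : Fin n) :
    ∑ i, inLap A i j = 0 := by
  simp only [inLap, Matrix.sub_apply, Matrix.diagonal_apply, Finset.sum_sub_distrib]
  rw [Finset.sum_ite_eq' Finset.univ j (indeg A)]
  simp [indeg]

lemma aux_abs_kernel (A : Matrix (Fin n) (Fin n) ℝ) (hA : ∀ i j, 0 ≤ A i j)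
    (z : Fin n → ℝ) (hz : (inLap A).mulVec z = 0) :
    (inLap A).mulVec (fun i => |z i|) = 0 := by
  have hd : ∀ i, 0 ≤ indeg A i := fun i => Finset.sum_nonneg fun k _ => hA k i
  have hle : ∀ i, (inLap A).mulVec (fun i => |z i|) i ≤ 0 := by
    intro i
    rw [aux_mulVec]
    have h1 : indeg A i * z i = ∑ j, A i j * z j := by
      have := congrFun hz i
      rw [aux_mulVec] at this
      simpa [sub_eq_zero] using this
    have h2 : indeg A i * |z i| = |∑ j, A i j * z j| := by
      rw [← h1, abs_mul, abs_of_nonneg (hd i)]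
    have h3 : |∑ j, A i j * z j| ≤ ∑ j, A i j * |z j| := by
      refine (Finset.abs_sum_le_sum_abs _ _).trans ?_
      refine Finset.sum_le_sum fun j _ => ?_
      rw [abs_mul, abs_of_nonneg (hA i j)]
    linarith [h2 ▸ h3]
  have hsum : ∑ i, (inLap A).mulVec (fun i => |z i|) i = 0 := by
    simp only [Matrix.mulVec, dotProduct]
    rw [Finset.sum_comm]
    refine Finset.sum_eq_zero fun j _ => ?_
    rw [← Finset.sum_mul, aux_colsum, zero_mul]
  funext i
  have := (Finset.sum_eq_zero_iff_of_nonpos (fun i _ => hle i)).1 hsum i (Finset.mem_univ i)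
  simpa using this

lemma aux_supp_inclosed (A : Matrix (Fin n) (Fin n) ℝ) (hA : ∀ i j, 0 ≤ A i j)
    (z : Fin n → ℝ) (hz0 : ∀ i, 0 ≤ z i) (hz : (inLap A).mulVec z = 0) :
    ∀ i j, z i = 0 → 0 < z j → A i j = 0 := by
  intro i j hi hj
  have h1 : indeg A i * z i = ∑ k, A i k * z k := by
    have := congrFun hz i
    rw [aux_mulVec] at this
    simpa [sub_eq_zero] using this
  rw [hi, mul_zero] at h1
  have h2 : ∀ k ∈ Finset.univ, 0 ≤ A i k * z k := fun k _ => mul_nonneg (hA i k) (hz0 k)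
  have h3 := (Finset.sum_eq_zero_iff_of_nonneg h2).1 h1.symm j (Finset.mem_univ j)
  rcases mul_eq_zero.1 h3 with h | h
  · exact h
  · exact absurd h (ne_of_gt hj)

lemma aux_normal (A : Matrix (Fin n) (Fin n) ℝ) (g : Fin n → ℝ) (hg : IsFHL A g) :
    (inLap A).mulVec (fun i => indeg A i - (inLap A)ᵀ.mulVec g i) = 0 := by
  set r : Fin n → ℝ := fun i => indeg A i - (inLap A)ᵀ.mulVec g i with hr
  have key : ∀ y : Fin n → ℝ, ∑ i, (inLap A)ᵀ.mulVec y i * r i = 0 := by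
    intro y
    set c : ℝ := ∑ i, (inLap A)ᵀ.mulVec y i * r i with hc
    set q : ℝ := ∑ i, ((inLap A)ᵀ.mulVec y i) ^ 2 with hq
    have hq0 : 0 ≤ q := Finset.sum_nonneg fun i _ => sq_nonneg _
    have hmain : ∀ t : ℝ, 0 ≤ t ^ 2 * q - 2 * t * c := by
      intro t
      have h1 := hg (g + t • y)
      have h2 : ∀ i, (inLap A)ᵀ.mulVec (g + t • y) i - indeg A i
          = -(r i) + t * (inLap A)ᵀ.mulVec y i := by
        intro i
        rw [Matrix.mulVec_add, Matrix.mulVec_smul]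
        simp [hr]
        ring
      have h3 : ∑ i, ((inLap A)ᵀ.mulVec (g + t • y) i - indeg A i) ^ 2
          = ∑ i, ((inLap A)ᵀ.mulVec g i - indeg A i) ^ 2 + t ^ 2 * q - 2 * t * c := by
        rw [Finset.sum_congr rfl (fun i _ => by rw [h2 i])]
        have h4 : ∀ i, (-(r i) + t * (inLap A)ᵀ.mulVec y i) ^ 2
            = ((inLap A)ᵀ.mulVec g i - indeg A i) ^ 2
              + t ^ 2 * ((inLap A)ᵀ.mulVec y i) ^ 2
              - 2 * t * ((inLap A)ᵀ.mulVec y i * r i) := by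
          intro i; simp only [hr]; ring
        rw [Finset.sum_congr rfl (fun i _ => h4 i)]
        simp only [Finset.sum_sub_distrib, Finset.sum_add_distrib, hq, hc,
          Finset.mul_sum]
      rw [h3] at h1
      linarith
    by_contra hcne
    have := hmain (c / (q + 1))
    have hq1 : 0 < q + 1 := by linarith
    have hc2 : 0 < c ^ 2 := by positivity
    rw [div_pow] at this
    have h5 : (c ^ 2 / (q + 1) ^ 2) * q - 2 * (c / (q + 1)) * c
        = (c ^ 2 * q - 2 * c ^ 2 * (q + 1)) / (q + 1) ^ 2 := by
      field_simp
    rw [h5] at this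
    have h6 : 0 ≤ c ^ 2 * q - 2 * c ^ 2 * (q + 1) := by
      have := (div_nonneg_iff.1 this)
      rcases this with ⟨h, _⟩ | ⟨_, h⟩
      · exact h
      · nlinarith
    nlinarith
  funext j
  have := key (Pi.single j 1)
  have hy : ∀ i, (inLap A)ᵀ.mulVec (Pi.single j 1) i = inLap A j i := by
    intro i
    simp [Matrix.mulVec, dotProduct, Pi.single_apply, Matrix.transpose_apply,
      mul_ite, Finset.sum_ite_eq']
  rw [Finset.sum_congr rfl (fun i _ => by rw [hy i])] at this
  simpa [Matrix.mulVec, dotProduct] using this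

lemma aux_orth (A : Matrix (Fin n) (Fin n) ℝ) (g : Fin n → ℝ) (w : Fin n → ℝ)
    (hw : (inLap A).mulVec w = 0) :
    ∑ i, (inLap A)ᵀ.mulVec g i * w i = 0 := by
  have h1 : ∀ i, (inLap A)ᵀ.mulVec g i * w i = ∑ k, inLap A k i * g k * w i := by
    intro i
    simp only [Matrix.mulVec, dotProduct, Matrix.transpose_apply, Finset.sum_mul]
  rw [Finset.sum_congr rfl (fun i _ => h1 i), Finset.sum_comm]
  refine Finset.sum_eq_zero fun k _ => ?_
  have h2 : ∑ i, inLap A k i * g k * w i = g k * ((inLap A).mulVec w k) := by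
    simp only [Matrix.mulVec, dotProduct, Finset.mul_sum]
    exact Finset.sum_congr rfl fun i _ => by ring
  rw [h2, hw]
  simp

lemma aux_proj_nonneg (A : Matrix (Fin n) (Fin n) ℝ) (hA : ∀ i j, 0 ≤ A i j)
    (r : Fin n → ℝ) (hker : (inLap A).mulVec r = 0)
    (horth : ∀ w : Fin n → ℝ, (inLap A).mulVec w = 0 → ∑ i, (indeg A i - r i) * w i = 0) :
    ∀ i, 0 ≤ r i := by
  have hd : ∀ i, 0 ≤ indeg A i := fun i => Finset.sum_nonneg fun k _ => hA k i
  have habs : (inLap A).mulVec (fun i => |r i|) = 0 := aux_abs_kernel A hA r hker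
  obtain ⟨m, hmdef⟩ : ∃ m : Fin n → ℝ, m = fun i => |r i| - r i := ⟨_, rfl⟩
  have hm_ker : (inLap A).mulVec m = 0 := by
    have : m = ((fun i => |r i|) - r) := by funext i; rw [hmdef]; simp
    rw [this, Matrix.mulVec_sub, habs, hker, sub_zero]
  have hm0 : ∀ i, 0 ≤ m i := by
    intro i; rw [hmdef]
    simp only [sub_nonneg]
    exact le_abs_self (r i)
  have horthm := horth m hm_ker
  have hrm : ∀ i, (indeg A i - r i) * m i = indeg A i * m i + m i ^ 2 / 2 := by
    intro i
    have : r i * m i = -(m i ^ 2) / 2 := by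
      simp only [hmdef]
      rcases abs_cases (r i) with ⟨h, _⟩ | ⟨h, _⟩ <;> rw [h] <;> ring
    nlinarith [this]
  have hsum : ∑ i, (indeg A i * m i + m i ^ 2 / 2) = 0 := by
    rw [← Finset.sum_congr rfl (fun i _ => hrm i)]
    exact horthm
  have hterm : ∀ i ∈ Finset.univ, (0:ℝ) ≤ indeg A i * m i + m i ^ 2 / 2 := by
    intro i _
    have h3 := mul_nonneg (hd i) (hm0 i)
    nlinarith [sq_nonneg (m i)]
  intro i
  have h4 := (Finset.sum_eq_zero_iff_of_nonneg hterm).1 hsum i (Finset.mem_univ i)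
  have h3 := mul_nonneg (hd i) (hm0 i)
  have hmi : m i = 0 := by nlinarith [sq_nonneg (m i)]
  simp only [hmdef] at hmi
  have h5 : |r i| = r i := by linarith
  exact abs_eq_self.1 h5

lemma aux_exists_min (A : Matrix (Fin n) (Fin n) ℝ) :
    ∀ T : Finset (Fin n), T.Nonempty → InClosed A T →
      ∃ S, S ⊆ T ∧ MinSourceSubgraph A S := by
  intro T
  induction T using Finset.strongInductionOn with
  | _ T ih =>
    intro hT hTc
    by_cases h : ∃ U, U ⊆ T ∧ U.Nonempty ∧ U ≠ T ∧ InClosed A U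
    · obtain ⟨U, hUT, hUne, hUneq, hUc⟩ := h
      obtain ⟨S, hS, hmin⟩ := ih U (Finset.ssubset_iff_subset_ne.2 ⟨hUT, hUneq⟩) hUne hUc
      exact ⟨S, hS.trans hUT, hmin⟩
    · push_neg at h
      exact ⟨T, Finset.Subset.refl T, hT, hTc, fun U hU h1 h2 => h U hU h1 h2⟩

lemma aux_exists_pos_kernel (A : Matrix (Fin n) (Fin n) ℝ) (hA : ∀ i j, 0 ≤ A i j)
    {S : Finset (Fin n)} (hS : MinSourceSubgraph A S) :
    ∃ x : Fin n → ℝ, (inLap A).mulVec x = 0 ∧ (∀ i, 0 ≤ x i) ∧ (∀ i, 0 < x i ↔ i ∈ S) := by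
  obtain ⟨hSne, hSc, hSmin⟩ := hS
  haveI : Nonempty {a // a ∈ S} := ⟨⟨hSne.choose, hSne.choose_spec⟩⟩
  set Q : Matrix {a // a ∈ S} {a // a ∈ S} ℝ :=
    Matrix.of (fun i j : {a // a ∈ S} => inLap A i.1 j.1) with hQ
  -- the all-ones vector is in the kernel of Qᵀ
  have hQT : Qᵀ.mulVec (fun _ => (1:ℝ)) = 0 := by
    funext j
    simp only [Matrix.mulVec, dotProduct, Matrix.transpose_apply, hQ, Matrix.of_apply,
      mul_one, Pi.zero_apply]
    have h1 : ∑ i : {a // a ∈ S}, inLap A i.1 j.1 = ∑ i ∈ S, inLap A i j.1 :=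
      Finset.sum_coe_sort S (fun i => inLap A i j.1)
    rw [h1]
    have h2 : ∑ i ∈ S, inLap A i j.1 = ∑ i, inLap A i j.1 := by
      refine Finset.sum_subset (Finset.subset_univ S) fun i _ hi => ?_
      simp only [inLap, Matrix.sub_apply, Matrix.diagonal_apply]
      have hij : i ≠ j.1 := fun h => hi (h ▸ j.2)
      rw [if_neg hij, hSc i j.1 hi j.2]
      ring
    rw [h2, aux_colsum]
  have hdet : Q.det = 0 := by
    rw [← Matrix.det_transpose]
    rw [← Matrix.exists_mulVec_eq_zero_iff]
    refine ⟨fun _ => 1, ?_, hQT⟩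
    intro h
    have := congrFun h (Classical.arbitrary _)
    norm_num at this
  obtain ⟨y, hy0, hyk⟩ := (Matrix.exists_mulVec_eq_zero_iff).2 hdet
  -- extend y by zero
  set x0 : Fin n → ℝ := fun i => if h : i ∈ S then y ⟨i, h⟩ else 0 with hx0
  have hx0ker : (inLap A).mulVec x0 = 0 := by
    funext i
    have hsplit : (inLap A).mulVec x0 i = ∑ j ∈ S, inLap A i j * x0 j := by
      simp only [Matrix.mulVec, dotProduct]
      refine (Finset.sum_subset (Finset.subset_univ S) fun j _ hj => ?_).symm
      simp only [hx0, dif_neg hj, mul_zero]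
    by_cases hi : i ∈ S
    · have hq := congrFun hyk ⟨i, hi⟩
      simp only [Matrix.mulVec, dotProduct, hQ, Matrix.of_apply, Pi.zero_apply] at hq
      rw [hsplit, Pi.zero_apply]
      rw [← Finset.sum_coe_sort S (fun j => inLap A i j * x0 j)]
      rw [← hq]
      refine Finset.sum_congr rfl fun j _ => ?_
      simp only [hx0, dif_pos j.2]
    · rw [hsplit, Pi.zero_apply]
      refine Finset.sum_eq_zero fun j hj => ?_
      have : inLap A i j = 0 := by
        simp only [inLap, Matrix.sub_apply, Matrix.diagonal_apply]
        have hij : i ≠ j := fun h => hi (h ▸ hj)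
        rw [if_neg hij, hSc i j hi hj]
        ring
      rw [this, zero_mul]
  set x : Fin n → ℝ := fun i => |x0 i| with hx
  have hxker : (inLap A).mulVec x = 0 := aux_abs_kernel A hA x0 hx0ker
  have hx_nonneg : ∀ i, 0 ≤ x i := fun i => abs_nonneg _
  have hx_subset : ∀ i, 0 < x i → i ∈ S := by
    intro i hxi
    by_contra hi
    simp only [hx, hx0, dif_neg hi, abs_zero] at hxi
    exact lt_irrefl 0 hxi
  -- support of x is nonempty
  have hx_ne : ∃ i, 0 < x i := by
    have : ∃ j : {a // a ∈ S}, y j ≠ 0 := by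
      by_contra hc
      push_neg at hc
      exact hy0 (funext fun j => hc j)
    obtain ⟨j, hj⟩ := this
    refine ⟨j.1, ?_⟩
    simp only [hx, hx0, dif_pos j.2]
    rw [Subtype.coe_eta]
    exact abs_pos.2 hj
  -- support is in-closed, hence equals S by minimality
  set T : Finset (Fin n) := Finset.univ.filter (fun i => 0 < x i) with hT
  have hTS : T ⊆ S := fun i hi => hx_subset i (Finset.mem_filter.1 hi).2
  have hTne : T.Nonempty := by
    obtain ⟨i, hi⟩ := hx_ne
    exact ⟨i, Finset.mem_filter.2 ⟨Finset.mem_univ i, hi⟩⟩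
  have hTc : InClosed A T := by
    intro i j hi hj
    have hxi : x i = 0 := by
      by_contra hxi
      exact hi (Finset.mem_filter.2 ⟨Finset.mem_univ i,
        lt_of_le_of_ne (hx_nonneg i) (Ne.symm hxi)⟩)
    have hxj : 0 < x j := (Finset.mem_filter.1 hj).2
    exact aux_supp_inclosed A hA x hx_nonneg hxker i j hxi hxj
  have hTeq : T = S := by
    by_contra hne
    exact hSmin T hTS hTne hne hTc
  refine ⟨x, hxker, hx_nonneg, fun i => ?_⟩
  constructor
  · intro hi
    rw [← hTeq]
    exact Finset.mem_filter.2 ⟨Finset.mem_univ i, hi⟩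
  · intro hi
    rw [← hTeq] at hi
    exact (Finset.mem_filter.1 hi).2

lemma aux_supp_min (A : Matrix (Fin n) (Fin n) ℝ) (hA : ∀ i j, 0 ≤ A i j)
    (r : Fin n → ℝ) (hr0 : ∀ i, 0 ≤ r i) (hker : (inLap A).mulVec r = 0) :
    ∀ i, 0 < r i → ∃ S, MinSourceSubgraph A S ∧ i ∈ S := by
  classical
  intro i hi
  by_contra hcon
  push_neg at hcon
  set N : Finset (Fin n) :=
    Finset.univ.filter (fun a => 0 < r a ∧ ∀ S, MinSourceSubgraph A S → a ∉ S) with hN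
  have hiN : i ∈ N := Finset.mem_filter.2 ⟨Finset.mem_univ i, hi, fun S hS hiS => hcon S hS hiS⟩
  have heq : ∀ a, indeg A a * r a = ∑ j, A a j * r j := by
    intro a
    have := congrFun hker a
    rw [aux_mulVec] at this
    simpa [sub_eq_zero] using this
  -- flow balance over N
  have hbal : ∑ a ∈ N, ∑ k ∈ Finset.univ \ N, A k a * r a
      = ∑ a ∈ N, ∑ j ∈ Finset.univ \ N, A a j * r j := by
    have h1 : ∑ a ∈ N, indeg A a * r a = ∑ a ∈ N, ∑ j, A a j * r j :=
      Finset.sum_congr rfl fun a _ => heq a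
    have h2 : ∀ a, indeg A a * r a = ∑ k, A k a * r a := by
      intro a
      simp only [indeg, Finset.sum_mul]
    have h3 : ∀ a, ∑ k : Fin n, A k a * r a
        = ∑ k ∈ N, A k a * r a + ∑ k ∈ Finset.univ \ N, A k a * r a := by
      intro a
      rw [← Finset.sum_sdiff (Finset.subset_univ N)]
      ring
    have h4 : ∀ a, ∑ j : Fin n, A a j * r j
        = ∑ j ∈ N, A a j * r j + ∑ j ∈ Finset.univ \ N, A a j * r j := by
      intro a
      rw [← Finset.sum_sdiff (Finset.subset_univ N)]
      ring
    rw [Finset.sum_congr rfl fun a _ => (h2 a).symm ▸ (h3 a),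
      Finset.sum_congr rfl fun a _ => h4 a] at h1
    · rw [Finset.sum_add_distrib, Finset.sum_add_distrib] at h1
      have h5 : ∑ a ∈ N, ∑ k ∈ N, A k a * r a = ∑ a ∈ N, ∑ j ∈ N, A a j * r j := by
        rw [Finset.sum_comm]
      linarith
  -- RHS of balance vanishes
  have hrhs : ∑ a ∈ N, ∑ j ∈ Finset.univ \ N, A a j * r j = 0 := by
    refine Finset.sum_eq_zero fun a ha => Finset.sum_eq_zero fun j hj => ?_
    rcases eq_or_lt_of_le (hr0 j) with h | h
    · rw [← h, mul_zero]
    · -- r j > 0 and j ∉ N, so j belongs to some minimal source subgraph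
      have hjN : j ∉ N := (Finset.mem_sdiff.1 hj).2
      have : ∃ S, MinSourceSubgraph A S ∧ j ∈ S := by
        by_contra hc
        push_neg at hc
        exact hjN (Finset.mem_filter.2 ⟨Finset.mem_univ j, h, fun S hS => hc S hS⟩)
      obtain ⟨S, hSmin, hjS⟩ := this
      have haS : a ∉ S := ((Finset.mem_filter.1 ha).2).2 S hSmin
      rw [hSmin.2.1 a j haS hjS, zero_mul]
  -- hence each term on the LHS vanishes: N is in-closed
  have hNclosed : InClosed A N := by
    have hzero : ∀ a ∈ N, ∀ k ∈ Finset.univ \ N, A k a * r a = 0 := by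
      have hsum0 : ∑ a ∈ N, ∑ k ∈ Finset.univ \ N, A k a * r a = 0 := by
        rw [hbal, hrhs]
      have hnn : ∀ a ∈ N, 0 ≤ ∑ k ∈ Finset.univ \ N, A k a * r a := fun a _ =>
        Finset.sum_nonneg fun k _ => mul_nonneg (hA k a) (hr0 a)
      intro a ha k hk
      have h6 := (Finset.sum_eq_zero_iff_of_nonneg hnn).1 hsum0 a ha
      exact (Finset.sum_eq_zero_iff_of_nonneg
        (fun k _ => mul_nonneg (hA k a) (hr0 a))).1 h6 k hk
    intro k a hk ha
    have hra : 0 < r a := ((Finset.mem_filter.1 ha).2).1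
    have := hzero a ha k (Finset.mem_sdiff.2 ⟨Finset.mem_univ k, hk⟩)
    rcases mul_eq_zero.1 this with h | h
    · exact h
    · exact absurd h (ne_of_gt hra)
  -- N contains a minimal source subgraph: contradiction
  obtain ⟨S, hSN, hSmin⟩ := aux_exists_min A N ⟨i, hiN⟩ hNclosed
  obtain ⟨s, hs⟩ := hSmin.1
  have hsN := hSN hs
  exact ((Finset.mem_filter.1 hsN).2).2 S hSmin hs

lemma aux_singleton_min (A : Matrix (Fin n) (Fin n) ℝ) (hA : ∀ i j, 0 ≤ A i j)
    (i : Fin n) (hdi : indeg A i = 0) : MinSourceSubgraph A {i} := by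
  refine ⟨⟨i, Finset.mem_singleton_self i⟩, ?_, ?_⟩
  · intro k j hk hj
    rw [Finset.mem_singleton] at hj
    subst hj
    exact (Finset.sum_eq_zero_iff_of_nonneg (fun k _ => hA k j)).1 hdi k (Finset.mem_univ k)
  · intro T hT hTne hTneq _
    rcases Finset.subset_singleton_iff.1 hT with h | h
    · exact absurd h (Finset.nonempty_iff_ne_empty.1 hTne)
    · exact hTneq h

lemma aux_vF_eq (A : Matrix (Fin n) (Fin n) ℝ) (g : Fin n → ℝ) (i : Fin n)
    (hdi : indeg A i ≠ 0) :
    vF A g i = (indeg A i - (inLap A)ᵀ.mulVec g i) / indeg A i := by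
  rw [vF, if_neg hdi]
  have h1 : ∑ k, A k i * (g i - g k) = (inLap A)ᵀ.mulVec g i := by
    rw [aux_mulVecT]
    simp only [mul_sub, Finset.sum_sub_distrib, ← Finset.sum_mul, indeg]
  rw [h1]
  field_simp

theorem stmt_16 (hn : 0 < n) (A : Matrix (Fin n) (Fin n) ℝ)
    (hA : ∀ i j, 0 ≤ A i j) (hdiag : ∀ i, A i i = 0)
    (hwc : WeaklyConnected A) (hW : 0 < totalWeight A)
    (g : Fin n → ℝ) (hg : IsFHL A g) :
    ∀ i : Fin n, 0 ≤ vF A g i ∧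
      (vF A g i = 0 ↔ ∀ S : Finset (Fin n), MinSourceSubgraph A S → i ∉ S) := by
  classical
  set r : Fin n → ℝ := fun i => indeg A i - (inLap A)ᵀ.mulVec g i with hrdef
  have hd : ∀ i, 0 ≤ indeg A i := fun i => Finset.sum_nonneg fun k _ => hA k i
  have hker : (inLap A).mulVec r = 0 := aux_normal A g hg
  have horth : ∀ w : Fin n → ℝ, (inLap A).mulVec w = 0 →
      ∑ k, (indeg A k - r k) * w k = 0 := by
    intro w hw
    have := aux_orth A g w hw
    rw [← this]
    refine Finset.sum_congr rfl fun k _ => ?_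
    simp only [hrdef]
    ring
  have hr0 : ∀ i, 0 ≤ r i := aux_proj_nonneg A hA r hker horth
  -- if i belongs to a minimal source subgraph and has positive in-degree, then r i > 0
  have hpos : ∀ i, ∀ S : Finset (Fin n), MinSourceSubgraph A S → i ∈ S →
      0 < indeg A i → 0 < r i := by
    intro i S hS hiS hdi
    obtain ⟨x, hxker, hx0, hxS⟩ := aux_exists_pos_kernel A hA hS
    have horthx := horth x hxker
    -- ∑ r k * x k = ∑ indeg k * x k ≥ indeg i * x i > 0
    have h1 : ∑ k, r k * x k = ∑ k, indeg A k * x k := by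
      have : ∀ k, (indeg A k - r k) * x k = indeg A k * x k - r k * x k := fun k => by ring
      rw [Finset.sum_congr rfl fun k _ => this k, Finset.sum_sub_distrib] at horthx
      linarith
    have h2 : 0 < indeg A i * x i := mul_pos hdi ((hxS i).2 hiS)
    have h3 : 0 < ∑ k, indeg A k * x k := by
      have h4 : ∀ k ∈ Finset.univ, 0 ≤ indeg A k * x k := fun k _ =>
        mul_nonneg (hd k) (hx0 k)
      calc 0 < indeg A i * x i := h2
      _ ≤ ∑ k, indeg A k * x k := Finset.single_le_sum h4 (Finset.mem_univ i)
    rw [← h1] at h3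
    -- some j has r j > 0 and x j > 0, i.e. j ∈ S ∩ supp r
    have h5 : ∃ j, 0 < r j * x j := by
      by_contra hc
      push_neg at hc
      have : ∑ k, r k * x k ≤ 0 := Finset.sum_nonpos fun k _ => hc k
      linarith
    obtain ⟨j, hj⟩ := h5
    have hrj : 0 < r j := by
      rcases lt_or_ge 0 (r j) with h | h
      · exact h
      · nlinarith [hx0 j, hr0 j]
    have hxj : 0 < x j := by
      rcases lt_or_ge 0 (x j) with h | h
      · exact h
      · nlinarith [hx0 j, hr0 j]
    have hjS : j ∈ S := (hxS j).1 hxj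
    -- the set S ∩ supp r is in-closed, nonempty, contained in S; minimality forces = S
    set T : Finset (Fin n) := S.filter (fun a => 0 < r a) with hT
    have hTS : T ⊆ S := Finset.filter_subset _ S
    have hTne : T.Nonempty := ⟨j, Finset.mem_filter.2 ⟨hjS, hrj⟩⟩
    have hTc : InClosed A T := by
      intro k a hk ha
      obtain ⟨haS, hra⟩ := Finset.mem_filter.1 ha
      by_cases hkS : k ∈ S
      · have hrk : r k = 0 := by
          by_contra hrk
          exact hk (Finset.mem_filter.2 ⟨hkS, lt_of_le_of_ne (hr0 k) (Ne.symm hrk)⟩)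
        exact aux_supp_inclosed A hA r hr0 hker k a hrk hra
      · exact hS.2.1 k a hkS haS
    have hTeq : T = S := by
      by_contra hne
      exact hS.2.2 T hTS hTne hne hTc
    have : i ∈ T := hTeq ▸ hiS
    exact (Finset.mem_filter.1 this).2
  intro i
  by_cases hdi : indeg A i = 0
  · constructor
    · rw [vF, if_pos hdi]; norm_num
    · rw [vF, if_pos hdi]
      constructor
      · intro h; norm_num at h
      · intro h
        exact absurd (Finset.mem_singleton_self i)
          (h {i} (aux_singleton_min A hA i hdi))
  · have hdpos : 0 < indeg A i := lt_of_le_of_ne (hd i) (Ne.symm hdi)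
    rw [aux_vF_eq A g i hdi]
    constructor
    · exact div_nonneg (hr0 i) (hd i)
    · rw [div_eq_zero_iff]
      constructor
      · intro h S hS hiS
        rcases h with h | h
        · have := hpos i S hS hiS hdpos
          simp only [hrdef] at this
          linarith
        · exact hdi h
      · intro h
        left
        by_contra hne
        have hri : 0 < r i := by
          rcases eq_or_lt_of_le (hr0 i) with hc | hc
          · exfalso
            apply hne
            simp only [hrdef] at hc
            exact hc.symm
          · exact hc
        obtain ⟨S, hS, hiS⟩ := aux_supp_min A hA r hr0 hker i hri
        exact h S hS hiS
end
end

section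
/- Let A be a weighted directed graph on n vertices with n ≥ 2 that is strongly connected (so δ i > 0 for every i), let ε be the vector of backward influence centralities ε i = v_b(i), and let π be a stationary distribution of the random walk with transition matrix P i j = A i j / δ i. Then there exists a real number c > 0 such that c * π i = (δ i)^2 * ε i for every vertex i. -/
open Matrix BigOperators

noncomputable section

variable {n : ℕ}

private lemma sum_sq_min_orth {n : ℕ} (M : Matrix (Fin n) (Fin n) ℝ) (d γ : Fin n → ℝ)
    (h : ∀ x, ∑ i, (M.mulVec γ i - d i) ^ 2 ≤ ∑ i, (M.mulVec x i - d i) ^ 2) :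
    ∀ y, ∑ i, (M.mulVec γ i - d i) * M.mulVec y i = 0 := by
  intro y
  set a := ∑ i, (M.mulVec γ i - d i) * M.mulVec y i with ha
  set b := ∑ i, (M.mulVec y i) ^ 2 with hb
  have hb0 : 0 ≤ b := Finset.sum_nonneg fun i _ => sq_nonneg _
  have key : ∀ s : ℝ, 0 ≤ 2 * s * a + s ^ 2 * b := by
    intro s
    have h1 := h (γ + s • y)
    have hx : ∀ i, M.mulVec (γ + s • y) i = M.mulVec γ i + s * M.mulVec y i := by
      intro i
      simp [Matrix.mulVec_add, Matrix.mulVec_smul]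
    have expand : ∑ i, (M.mulVec (γ + s • y) i - d i) ^ 2
        = ∑ i, ((M.mulVec γ i - d i) ^ 2
            + (2 * s * ((M.mulVec γ i - d i) * M.mulVec y i) + s ^ 2 * (M.mulVec y i) ^ 2)) := by
      refine Finset.sum_congr rfl fun i _ => ?_
      rw [hx i]; ring
    rw [expand, Finset.sum_add_distrib, Finset.sum_add_distrib, ← Finset.mul_sum,
      ← Finset.mul_sum, ← ha, ← hb] at h1
    linarith
  have hb1 : (0:ℝ) < b + 1 := by linarith
  have h1 := key (-a / (b + 1))
  have h2 : 0 ≤ (2 * (-a / (b + 1)) * a + (-a / (b + 1)) ^ 2 * b) * (b + 1) ^ 2 :=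
    mul_nonneg h1 (sq_nonneg _)
  have h3 : (2 * (-a / (b + 1)) * a + (-a / (b + 1)) ^ 2 * b) * (b + 1) ^ 2
      = -(a ^ 2 * (b + 2)) := by
    field_simp
    ring
  rw [h3] at h2
  have h4 : a ^ 2 ≤ 0 := by nlinarith
  have h5 := le_antisymm h4 (sq_nonneg a)
  exact pow_eq_zero_iff (by norm_num) |>.mp h5
private lemma harmonic_unique {n : ℕ} (A : Matrix (Fin n) (Fin n) ℝ)
    (hA : ∀ i j, 0 ≤ A i j) (hsc : StronglyConnected A)
    (δ w : Fin n → ℝ) (hw : ∀ i, 0 < w i)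
    (hwh : ∀ j, ∑ i, A i j * w i = δ j * w j)
    (u : Fin n → ℝ) (huh : ∀ j, ∑ i, A i j * u i = δ j * u j)
    (hne : Nonempty (Fin n)) :
    ∃ m : ℝ, ∀ i, u i = m * w i := by
  haveI := hne
  obtain ⟨j0, hj0⟩ := Finite.exists_max (fun i => u i / w i)
  set m := u j0 / w j0 with hmdef
  have hub : ∀ i, u i ≤ m * w i := by
    intro i
    have h1 : u i / w i ≤ m := hj0 i
    calc u i = u i / w i * w i := (div_mul_cancel₀ _ (hw i).ne').symm
      _ ≤ m * w i := mul_le_mul_of_nonneg_right h1 (hw i).le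
  have key : ∀ j, u j = m * w j → ∀ i, 0 < A i j → u i = m * w i := by
    intro j hj i hij
    have hsum : ∑ k, A k j * (m * w k - u k) = 0 := by
      have h1 := huh j
      have h2 := hwh j
      have h3 : ∑ k, A k j * (m * w k - u k)
          = m * (∑ k, A k j * w k) - ∑ k, A k j * u k := by
        rw [Finset.mul_sum, ← Finset.sum_sub_distrib]
        exact Finset.sum_congr rfl fun k _ => by ring
      rw [h3, h1, h2, hj]; ring
    have h4 := (Finset.sum_eq_zero_iff_of_nonneg
      (fun k _ => mul_nonneg (hA k j) (by linarith [hub k]))).mp hsum i (Finset.mem_univ i)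
    rcases mul_eq_zero.mp h4 with h | h
    · exact absurd h hij.ne'
    · linarith
  refine ⟨m, fun i => ?_⟩
  have hbase : u j0 = m * w j0 := by
    rw [hmdef]
    exact (div_mul_cancel₀ _ (hw j0).ne').symm
  have hreach := hsc i j0
  induction hreach using Relation.ReflTransGen.head_induction_on with
  | refl => exact hbase
  | head h' hr ih => exact key _ ih _ h'
theorem stmt_18 (hn : 2 ≤ n) (A : Matrix (Fin n) (Fin n) ℝ)
    (hA : ∀ i j, 0 ≤ A i j) (hdiag : ∀ i, A i i = 0)
    (hsc : StronglyConnected A)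
    (γ : Fin n → ℝ) (hγ : IsFHL Aᵀ γ)
    (π : Fin n → ℝ) (hπ0 : ∀ i, 0 ≤ π i) (hπ1 : ∑ i, π i = 1)
    (hπstat : ∀ j, ∑ i, π i * (A i j / outdeg A i) = π j) :
    ∃ c : ℝ, 0 < c ∧ ∀ i, c * π i = (outdeg A i) ^ 2 * vF Aᵀ γ i := by
  have hne : Nonempty (Fin n) := ⟨⟨0, by omega⟩⟩
  set δ := outdeg A with hδdef
  -- positivity of out-degrees
  have hδpos : ∀ i, 0 < δ i := by
    intro i
    obtain ⟨j, hj⟩ := Fintype.exists_ne_of_one_lt_card (by rw [Fintype.card_fin]; omega) i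
    rcases (hsc i j).cases_head with h | ⟨k, hk, -⟩
    · exact absurd h.symm hj
    · exact Finset.sum_pos' (fun k _ => hA i k) ⟨k, Finset.mem_univ k, hk⟩
  -- positivity of π
  have hπpos : ∀ i, 0 < π i := by
    have hex : ∃ i0, 0 < π i0 := by
      by_contra hcon
      push_neg at hcon
      have h1 : ∑ i, π i ≤ 0 := Finset.sum_nonpos fun i _ => hcon i
      linarith
    obtain ⟨i0, hi0⟩ := hex
    intro j
    have hreach := hsc i0 j
    induction hreach with
    | refl => exact hi0
    | tail hr h' ih =>
      rw [← hπstat _]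
      exact Finset.sum_pos'
        (fun k _ => mul_nonneg (hπ0 k) (div_nonneg (hA k _) (hδpos k).le))
        ⟨_, Finset.mem_univ _, mul_pos ih (div_pos h' (hδpos _))⟩
  set w : Fin n → ℝ := fun i => π i / δ i with hwdef
  have hwpos : ∀ i, 0 < w i := fun i => div_pos (hπpos i) (hδpos i)
  have hwi : ∀ i, δ i * w i = π i := by
    intro i
    show δ i * (π i / δ i) = π i
    rw [mul_comm]
    exact div_mul_cancel₀ _ (hδpos i).ne'
  have hwharm : ∀ j, ∑ i, A i j * w i = δ j * w j := by
    intro j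
    have h1 : ∑ i, A i j * w i = ∑ i, π i * (A i j / outdeg A i) := by
      refine Finset.sum_congr rfl fun i _ => ?_
      show A i j * (π i / δ i) = π i * (A i j / δ i)
      ring
    rw [h1, hπstat j, hwi j]
  set M := (inLap Aᵀ)ᵀ with hMdef
  have hdT : indeg Aᵀ = δ := by
    funext i
    simp [indeg, outdeg, hδdef, Matrix.transpose_apply]
  have hMentry : ∀ i j, M i j = (if j = i then δ j else 0) - A i j := by
    intro i j
    show (inLap Aᵀ) j i = _
    rw [inLap]
    simp [Matrix.sub_apply, Matrix.diagonal_apply, Matrix.transpose_apply, hdT]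
  have hMcol : ∀ (v : Fin n → ℝ) (j : Fin n),
      ∑ i, M i j * v i = δ j * v j - ∑ i, A i j * v i := by
    intro v j
    have h0 : ∀ i, M i j * v i = (if j = i then δ j * v i else 0) - A i j * v i := by
      intro i; rw [hMentry]; split <;> ring
    rw [Finset.sum_congr rfl fun i _ => h0 i, Finset.sum_sub_distrib, Finset.sum_ite_eq]
    simp
  have hγ' : ∀ x, ∑ i, (M.mulVec γ i - δ i) ^ 2 ≤ ∑ i, (M.mulVec x i - δ i) ^ 2 := by
    intro x
    have h0 := hγ x
    simpa [IsFHL, hdT] using h0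
  have hortho := sum_sq_min_orth M δ γ hγ'
  set r : Fin n → ℝ := fun i => M.mulVec γ i - δ i with hrdef
  have hr_eq : ∀ i, r i = M.mulVec γ i - δ i := fun i => rfl
  have hrharm : ∀ j, ∑ i, A i j * r i = δ j * r j := by
    intro j
    have h2 : ∀ i, M.mulVec (Pi.single j 1) i = M i j := by
      intro i
      simp [Matrix.mulVec, dotProduct, Pi.single_apply]
    have h1 : ∑ i, M i j * r i = 0 := by
      have h0 := hortho (Pi.single j 1)
      rw [← h0]
      refine Finset.sum_congr rfl fun i _ => ?_
      rw [h2 i, hr_eq i, mul_comm]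
    have h3 := hMcol r j
    rw [h1] at h3
    linarith
  have hwM : ∀ j, ∑ i, M i j * w i = 0 := by
    intro j
    rw [hMcol w j, hwharm j, sub_self]
  obtain ⟨m, hm⟩ := harmonic_unique A hA hsc δ w hwpos hwharm r hrharm hne
  have hδw : ∑ i, δ i * w i = 1 := by
    rw [Finset.sum_congr rfl fun i _ => hwi i, hπ1]
  have hrMγ : ∑ i, r i * M.mulVec γ i = 0 := by
    calc ∑ i, r i * M.mulVec γ i = ∑ i, (M.mulVec γ i - δ i) * M.mulVec γ i :=
          Finset.sum_congr rfl fun i _ => by rw [hr_eq i]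
      _ = 0 := hortho γ
  have hm_val : m = -∑ i, r i ^ 2 := by
    have h1 : ∑ i, δ i * r i = m := by
      calc ∑ i, δ i * r i = ∑ i, δ i * (m * w i) :=
            Finset.sum_congr rfl fun i _ => by rw [hm i]
        _ = m * ∑ i, δ i * w i := by
            rw [Finset.mul_sum]
            exact Finset.sum_congr rfl fun i _ => by ring
        _ = m := by rw [hδw, mul_one]
    have h2 : ∑ i, δ i * r i = -∑ i, r i ^ 2 := by
      have h3 : ∀ i, δ i * r i = r i * M.mulVec γ i - r i ^ 2 := by
        intro i
        rw [hr_eq i]; ring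
      rw [Finset.sum_congr rfl fun i _ => h3 i, Finset.sum_sub_distrib, hrMγ]
      ring
    linarith
  have hrne : ∑ i, r i ^ 2 ≠ 0 := by
    intro hzero
    have hr0 : ∀ i, r i = 0 := by
      intro i
      have h0 := (Finset.sum_eq_zero_iff_of_nonneg
        (fun k _ => sq_nonneg (r k))).mp hzero i (Finset.mem_univ i)
      exact pow_eq_zero_iff (by norm_num) |>.mp h0
    have hδγ : ∀ i, M.mulVec γ i = δ i := by
      intro i
      have h0 := hr_eq i
      rw [hr0 i] at h0
      linarith
    have h1 : (1:ℝ) = ∑ i, M.mulVec γ i * w i := by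
      rw [← hδw]
      exact Finset.sum_congr rfl fun i _ => by rw [hδγ i]
    have h2 : ∑ i, M.mulVec γ i * w i = ∑ j, (∑ i, M i j * w i) * γ j := by
      simp only [Matrix.mulVec, dotProduct, Finset.sum_mul]
      rw [Finset.sum_comm]
      refine Finset.sum_congr rfl fun j _ => ?_
      exact Finset.sum_congr rfl fun i _ => by ring
    rw [h2] at h1
    simp only [hwM, zero_mul, Finset.sum_const_zero] at h1
    exact one_ne_zero h1
  refine ⟨∑ i, r i ^ 2, ?_, ?_⟩
  · exact lt_of_le_of_ne (Finset.sum_nonneg fun i _ => sq_nonneg _) (Ne.symm hrne)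
  · intro i
    have hind : indeg Aᵀ i = δ i := congrFun hdT i
    have hvf : vF Aᵀ γ i = 1 - (∑ k, Aᵀ k i * (γ i - γ k)) / δ i := by
      rw [vF, hind, if_neg (hδpos i).ne']
    have hδi : δ i = ∑ k, A i k := rfl
    have hL : ∑ k, Aᵀ k i * (γ i - γ k) = δ i * γ i - ∑ k, A i k * γ k := by
      have h0 : ∀ k, Aᵀ k i * (γ i - γ k) = A i k * γ i - A i k * γ k := fun k => by
        rw [Matrix.transpose_apply]; ring
      rw [Finset.sum_congr rfl fun k _ => h0 k, Finset.sum_sub_distrib, ← Finset.sum_mul,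
        ← hδi]
    have hR : M.mulVec γ i = δ i * γ i - ∑ k, A i k * γ k := by
      have h0 : ∀ j, M i j * γ j = (if j = i then δ j * γ j else 0) - A i j * γ j := by
        intro j; rw [hMentry]; split <;> ring
      show ∑ j, M i j * γ j = _
      rw [Finset.sum_congr rfl fun j _ => h0 j, Finset.sum_sub_distrib, Finset.sum_ite_eq']
      simp
    have hfin : δ i ^ 2 * vF Aᵀ γ i = -(δ i * r i) := by
      rw [hvf, hL, ← hR, hr_eq i]
      have hδne := (hδpos i).ne'
      field_simp
      ring
    calc (∑ j, r j ^ 2) * π i = -(m * π i) := by rw [hm_val]; ring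
      _ = -(δ i * r i) := by rw [hm i, ← hwi i]; ring
      _ = δ i ^ 2 * vF Aᵀ γ i := hfin.symm
end
end
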